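/- arXiv:1308.3604 — 6 statements merged into one kernel-verified Lean document; each statement's English description precedes it below -/
import Mathlib

section
/- Let p be an odd prime, N ≥ 1 an integer, and let x, y be N×N matrices with entries in ℤ_p. Then for every integer n ≥ 1, the logarithm series log((1 + p·x)(1 + p^n·y)) and log(1 + p·x) converge p-adically, their sums have entries in ℤ_p, and log((1 + p·x)(1 + p^n·y)) ≡ log(1 + p·x) (mod p^n). -/
/-- The logarithm series `-∑_{k ≥ 1} (1 - z)ᵏ/k` of a square matrix over `ℚ_[p]`,
as an unconditional `tsum` (the `k = 0` term vanishes since `(0 : ℚ_[p])⁻¹ = 0`). -/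
noncomputable def matLog {p : ℕ} [Fact p.Prime] {N : ℕ}
    (z : Matrix (Fin N) (Fin N) ℚ_[p]) : Matrix (Fin N) (Fin N) ℚ_[p] :=
  -∑' k : ℕ, ((k : ℚ_[p]))⁻¹ • (1 - z) ^ k

/-- The coefficient-wise coercion of a matrix over `ℤ_[p]` to a matrix over `ℚ_[p]`. -/
def matQ {p : ℕ} [Fact p.Prime] {N : ℕ}
    (x : Matrix (Fin N) (Fin N) ℤ_[p]) : Matrix (Fin N) (Fin N) ℚ_[p] :=
  x.map (fun a => (a : ℚ_[p]))

section Aux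

variable {p : ℕ} [hp : Fact p.Prime] {N : ℕ}

open IsUltrametricDist

private lemma mul_entry_le {A B : Matrix (Fin N) (Fin N) ℚ_[p]} {r s : ℝ}
    (hr : 0 ≤ r) (hs : 0 ≤ s) (hA : ∀ i j, ‖A i j‖ ≤ r) (hB : ∀ i j, ‖B i j‖ ≤ s) :
    ∀ i j, ‖(A * B) i j‖ ≤ r * s := by
  intro i j
  rw [Matrix.mul_apply]
  refine norm_sum_le_of_forall_le_of_nonneg (mul_nonneg hr hs) fun l _ => ?_
  rw [norm_mul]
  exact mul_le_mul (hA i l) (hB l j) (norm_nonneg _) hr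

private lemma pow_entry_le {A : Matrix (Fin N) (Fin N) ℚ_[p]} {r : ℝ}
    (hr : 0 ≤ r) (hA : ∀ i j, ‖A i j‖ ≤ r) :
    ∀ k, ∀ i j, ‖(A ^ k) i j‖ ≤ r ^ k := by
  intro k
  induction k with
  | zero =>
    intro i j
    rw [pow_zero, pow_zero]
    by_cases h : i = j <;> simp [Matrix.one_apply, h]
  | succ k ih =>
    intro i j
    rw [pow_succ]
    calc ‖(A ^ k * A) i j‖ ≤ r ^ k * r :=
          mul_entry_le (pow_nonneg hr k) hr ih hA i j
      _ = r ^ (k + 1) := by ring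

private lemma pow_sub_pow_entry_le {A B : Matrix (Fin N) (Fin N) ℚ_[p]} {r s : ℝ}
    (hr : 0 ≤ r) (hs : 0 ≤ s)
    (hA : ∀ i j, ‖A i j‖ ≤ r) (hB : ∀ i j, ‖B i j‖ ≤ r)
    (hAB : ∀ i j, ‖(A - B) i j‖ ≤ s) :
    ∀ k, ∀ i j, ‖(A ^ (k + 1) - B ^ (k + 1)) i j‖ ≤ r ^ k * s := by
  intro k
  induction k with
  | zero => simpa using hAB
  | succ k ih =>
    have key : A ^ (k + 2) - B ^ (k + 2)
        = A * (A ^ (k + 1) - B ^ (k + 1)) + (A - B) * B ^ (k + 1) := by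
      rw [mul_sub, sub_mul, ← pow_succ', ← pow_succ']
      abel
    intro i j
    rw [key, Matrix.add_apply]
    refine le_trans (Padic.nonarchimedean _ _) (max_le ?_ ?_)
    · calc ‖(A * (A ^ (k + 1) - B ^ (k + 1))) i j‖ ≤ r * (r ^ k * s) :=
            mul_entry_le hr (mul_nonneg (pow_nonneg hr k) hs) hA ih i j
        _ = r ^ (k + 1) * s := by ring
    · calc ‖((A - B) * B ^ (k + 1)) i j‖ ≤ s * r ^ (k + 1) :=
            mul_entry_le hs (pow_nonneg hr _) hAB (pow_entry_le hr hB (k + 1)) i j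
        _ = r ^ (k + 1) * s := by ring

private lemma norm_inv_natCast_le (p : ℕ) [hp : Fact p.Prime] {k : ℕ} (hk : k ≠ 0) :
    ‖((k : ℚ_[p]))⁻¹‖ ≤ (k : ℝ) := by
  set v := k.factorization p with hv
  have hk' : p ^ v * ordCompl[p] k = k := Nat.ordProj_mul_ordCompl_eq_self k p
  have hmnorm : ‖((ordCompl[p] k : ℕ) : ℚ_[p])‖ = 1 := by
    refine le_antisymm (by exact_mod_cast Padic.norm_int_le_one ((ordCompl[p] k : ℕ) : ℤ)) ?_
    by_contra h
    push_neg at h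
    have h' : ‖(((ordCompl[p] k : ℕ) : ℤ) : ℚ_[p])‖ < 1 := by exact_mod_cast h
    have hdvd := (Padic.norm_intCast_lt_one_iff (k := ((ordCompl[p] k : ℕ) : ℤ))).mp h'
    have : (p : ℕ) ∣ ordCompl[p] k := by exact_mod_cast hdvd
    exact Nat.not_dvd_ordCompl hp.out hk this
  have hnorm : ‖(k : ℚ_[p])‖ = ((p : ℝ) ^ v)⁻¹ := by
    conv_lhs => rw [← hk']
    push_cast
    rw [norm_mul, norm_pow, Padic.norm_p, hmnorm, mul_one, inv_pow]
  rw [norm_inv, hnorm, inv_inv]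
  have : ((p ^ v : ℕ) : ℝ) ≤ (k : ℝ) := by exact_mod_cast Nat.ordProj_le p hk
  calc (p : ℝ) ^ v = ((p ^ v : ℕ) : ℝ) := by push_cast; ring
    _ ≤ (k : ℝ) := this

private lemma nat_succ_le_three_pow : ∀ k : ℕ, k + 1 ≤ 3 ^ k
  | 0 => le_refl 1
  | (k + 1) => by
    have h := nat_succ_le_three_pow k
    calc k + 2 ≤ 3 * (k + 1) := by omega
      _ ≤ 3 * 3 ^ k := Nat.mul_le_mul_left 3 h
      _ = 3 ^ (k + 1) := by rw [pow_succ]; ring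

end Aux

/-- **Lemma (log congruence).**
Let `p` be an odd prime, `N ≥ 1`, `x, y ∈ gl(N, ℤ_[p])` and `n ≥ 1`. Then the series
`log ((1 + p x)(1 + pⁿ y))` and `log (1 + p x)` converge `p`-adically, their sums have entries
in `ℤ_[p]`, and `log ((1 + p x)(1 + pⁿ y)) ≡ log (1 + p x) (mod pⁿ)`. -/
theorem stmt_7 (p : ℕ) [Fact p.Prime] (hp : p ≠ 2) (N : ℕ) (hN : 1 ≤ N)
    (x y : Matrix (Fin N) (Fin N) ℤ_[p]) (n : ℕ) (hn : 1 ≤ n) :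
    Summable (fun k : ℕ => ((k : ℚ_[p]))⁻¹ •
      (1 - (1 + (p : ℚ_[p]) • matQ x) * (1 + (p : ℚ_[p]) ^ n • matQ y)) ^ k) ∧
    Summable (fun k : ℕ => ((k : ℚ_[p]))⁻¹ • (1 - (1 + (p : ℚ_[p]) • matQ x)) ^ k) ∧
    (∀ i j, ‖matLog ((1 + (p : ℚ_[p]) • matQ x) * (1 + (p : ℚ_[p]) ^ n • matQ y)) i j‖ ≤ 1) ∧
    (∀ i j, ‖matLog (1 + (p : ℚ_[p]) • matQ x) i j‖ ≤ 1) ∧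
    (∀ i j, ‖matLog ((1 + (p : ℚ_[p]) • matQ x) * (1 + (p : ℚ_[p]) ^ n • matQ y)) i j
        - matLog (1 + (p : ℚ_[p]) • matQ x) i j‖ ≤ (p : ℝ) ^ (-(n : ℤ))) := by
  have hfact : p.Prime := Fact.out
  have hp1 : (1 : ℝ) < (p : ℝ) := by exact_mod_cast hfact.one_lt
  have hp0 : (0 : ℝ) < (p : ℝ) := lt_trans one_pos hp1
  have hrpos : (0 : ℝ) < (p : ℝ)⁻¹ := inv_pos.mpr hp0
  have hr0 : (0 : ℝ) ≤ (p : ℝ)⁻¹ := le_of_lt hrpos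
  have hr1 : (p : ℝ)⁻¹ ≤ 1 := inv_le_one_of_one_le₀ (le_of_lt hp1)
  have hp3 : 3 ≤ p := by
    have := hfact.two_le
    rcases Nat.lt_or_ge p 3 with h | h
    · interval_cases p <;> simp_all
    · exact h
  set a : Matrix (Fin N) (Fin N) ℚ_[p] := (p : ℚ_[p]) • matQ x with ha_def
  set b : Matrix (Fin N) (Fin N) ℚ_[p] := (p : ℚ_[p]) ^ n • matQ y with hb_def
  -- entry bounds for a and b
  have ha : ∀ i j, ‖a i j‖ ≤ (p : ℝ)⁻¹ := by
    intro i j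
    rw [ha_def, Matrix.smul_apply, smul_eq_mul, norm_mul, Padic.norm_p]
    have : ‖matQ x i j‖ ≤ 1 := by
      rw [matQ, Matrix.map_apply, PadicInt.padic_norm_e_of_padicInt]
      exact PadicInt.norm_le_one _
    calc (p : ℝ)⁻¹ * ‖matQ x i j‖ ≤ (p : ℝ)⁻¹ * 1 :=
          mul_le_mul_of_nonneg_left this hr0
      _ = (p : ℝ)⁻¹ := mul_one _
  have hb : ∀ i j, ‖b i j‖ ≤ ((p : ℝ)⁻¹) ^ n := by
    intro i j
    rw [hb_def, Matrix.smul_apply, smul_eq_mul, norm_mul, norm_pow, Padic.norm_p]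
    have : ‖matQ y i j‖ ≤ 1 := by
      rw [matQ, Matrix.map_apply, PadicInt.padic_norm_e_of_padicInt]
      exact PadicInt.norm_le_one _
    calc ((p : ℝ)⁻¹) ^ n * ‖matQ y i j‖ ≤ ((p : ℝ)⁻¹) ^ n * 1 :=
          mul_le_mul_of_nonneg_left this (pow_nonneg hr0 n)
      _ = ((p : ℝ)⁻¹) ^ n := mul_one _
  have hbn : ((p : ℝ)⁻¹) ^ n ≤ (p : ℝ)⁻¹ := by
    calc ((p : ℝ)⁻¹) ^ n ≤ ((p : ℝ)⁻¹) ^ 1 := pow_le_pow_of_le_one hr0 hr1 hn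
      _ = (p : ℝ)⁻¹ := pow_one _
  have hab : ∀ i j, ‖(a * b) i j‖ ≤ (p : ℝ)⁻¹ * ((p : ℝ)⁻¹) ^ n :=
    mul_entry_le hr0 (pow_nonneg hr0 n) ha hb
  have habn : (p : ℝ)⁻¹ * ((p : ℝ)⁻¹) ^ n ≤ ((p : ℝ)⁻¹) ^ n := by
    calc (p : ℝ)⁻¹ * ((p : ℝ)⁻¹) ^ n ≤ 1 * ((p : ℝ)⁻¹) ^ n :=
          mul_le_mul_of_nonneg_right hr1 (pow_nonneg hr0 n)
      _ = ((p : ℝ)⁻¹) ^ n := one_mul _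
  -- the two "w" matrices
  set w₁ : Matrix (Fin N) (Fin N) ℚ_[p] := 1 - (1 + a) * (1 + b) with hw₁_def
  set w₂ : Matrix (Fin N) (Fin N) ℚ_[p] := 1 - (1 + a) with hw₂_def
  have e₁ : w₁ = -a + (-b + -(a * b)) := by rw [hw₁_def]; noncomm_ring
  have e₂ : w₂ = -a := by rw [hw₂_def]; noncomm_ring
  have e₃ : w₁ - w₂ = -b + -(a * b) := by rw [hw₁_def, hw₂_def]; noncomm_ring
  have hw₂e : ∀ i j, ‖w₂ i j‖ ≤ (p : ℝ)⁻¹ := by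
    intro i j
    rw [e₂, Matrix.neg_apply, norm_neg]
    exact ha i j
  have hw₁e : ∀ i j, ‖w₁ i j‖ ≤ (p : ℝ)⁻¹ := by
    intro i j
    rw [e₁, Matrix.add_apply]
    refine le_trans (Padic.nonarchimedean _ _) (max_le ?_ ?_)
    · rw [Matrix.neg_apply, norm_neg]; exact ha i j
    · rw [Matrix.add_apply]
      refine le_trans (Padic.nonarchimedean _ _) (max_le ?_ ?_)
      · rw [Matrix.neg_apply, norm_neg]; exact le_trans (hb i j) hbn
      · rw [Matrix.neg_apply, norm_neg]
        exact le_trans (hab i j) (le_trans habn hbn)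
  have hde : ∀ i j, ‖(w₁ - w₂) i j‖ ≤ ((p : ℝ)⁻¹) ^ n := by
    intro i j
    rw [e₃, Matrix.add_apply]
    refine le_trans (Padic.nonarchimedean _ _) (max_le ?_ ?_)
    · rw [Matrix.neg_apply, norm_neg]; exact hb i j
    · rw [Matrix.neg_apply, norm_neg]; exact le_trans (hab i j) habn
  -- bound for the k-th term entries
  have hterm : ∀ (w : Matrix (Fin N) (Fin N) ℚ_[p]), (∀ i j, ‖w i j‖ ≤ (p : ℝ)⁻¹) →
      ∀ (k : ℕ) (i j : Fin N),
        ‖(k : ℚ_[p])⁻¹ * (w ^ k) i j‖ ≤ (k : ℝ) * ((p : ℝ)⁻¹) ^ k := by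
    intro w hw k i j
    rcases Nat.eq_zero_or_pos k with rfl | hk
    · simp
    · rw [norm_mul]
      exact mul_le_mul (norm_inv_natCast_le p hk.ne')
        (pow_entry_le hr0 hw k i j) (norm_nonneg _) (Nat.cast_nonneg k)
  -- each term has norm at most 1
  have hterm1 : ∀ (w : Matrix (Fin N) (Fin N) ℚ_[p]), (∀ i j, ‖w i j‖ ≤ (p : ℝ)⁻¹) →
      ∀ (k : ℕ) (i j : Fin N), ‖(k : ℚ_[p])⁻¹ * (w ^ k) i j‖ ≤ 1 := by
    intro w hw k i j
    refine le_trans (hterm w hw k i j) ?_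
    rw [inv_pow, ← div_eq_mul_inv, div_le_one (by positivity)]
    exact_mod_cast (Nat.lt_pow_self (n := k) hfact.one_lt).le
  -- summability of the matrix series
  have hsum : ∀ (w : Matrix (Fin N) (Fin N) ℚ_[p]), (∀ i j, ‖w i j‖ ≤ (p : ℝ)⁻¹) →
      Summable (fun k : ℕ => ((k : ℚ_[p]))⁻¹ • w ^ k) := by
    intro w hw
    refine Pi.summable.mpr fun i => Pi.summable.mpr fun j => ?_
    have hgeom : Summable (fun k : ℕ => (k : ℝ) * ((p : ℝ)⁻¹) ^ k) := by
      have := summable_pow_mul_geometric_of_norm_lt_one (R := ℝ) 1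
        (r := (p : ℝ)⁻¹) (by rw [Real.norm_eq_abs, abs_of_nonneg hr0]; exact
          inv_lt_one_of_one_lt₀ hp1)
      simpa [pow_one] using this
    refine Summable.of_norm_bounded hgeom fun k => ?_
    have : ((((k : ℚ_[p]))⁻¹ • w ^ k) i j) = (k : ℚ_[p])⁻¹ * (w ^ k) i j := by
      simp [Matrix.smul_apply, smul_eq_mul]
    rw [this]
    exact hterm w hw k i j
  have hsum₁ := hsum w₁ hw₁e
  have hsum₂ := hsum w₂ hw₂e
  -- evaluation of the matrix tsum at an entry
  have entry_eq : ∀ (w : Matrix (Fin N) (Fin N) ℚ_[p])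
      (hw : Summable (fun k : ℕ => ((k : ℚ_[p]))⁻¹ • w ^ k)) (i j : Fin N),
      (∑' k : ℕ, ((k : ℚ_[p]))⁻¹ • w ^ k) i j = ∑' k : ℕ, (k : ℚ_[p])⁻¹ * (w ^ k) i j := by
    intro w hw i j
    have h1 : Summable (fun k : ℕ => (((k : ℚ_[p]))⁻¹ • w ^ k) i) := Pi.summable.mp hw i
    erw [tsum_apply hw, tsum_apply h1]
    exact tsum_congr fun k => by simp [Matrix.smul_apply, smul_eq_mul]
  -- entry summability
  have hesum : ∀ (w : Matrix (Fin N) (Fin N) ℚ_[p])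
      (hw : Summable (fun k : ℕ => ((k : ℚ_[p]))⁻¹ • w ^ k)) (i j : Fin N),
      Summable (fun k : ℕ => (k : ℚ_[p])⁻¹ * (w ^ k) i j) := by
    intro w hw i j
    have h1 : Summable (fun k : ℕ => (((k : ℚ_[p]))⁻¹ • w ^ k) i) := Pi.summable.mp hw i
    have h2 : Summable (fun k : ℕ => (((k : ℚ_[p]))⁻¹ • w ^ k) i j) := Pi.summable.mp h1 j
    refine h2.congr fun k => ?_
    simp [Matrix.smul_apply, smul_eq_mul]
  -- bounds on matLog entries
  have hlog : ∀ (w : Matrix (Fin N) (Fin N) ℚ_[p]),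
      matLog (1 - w) = -∑' k : ℕ, ((k : ℚ_[p]))⁻¹ • w ^ k := by
    intro w
    rw [matLog, sub_sub_cancel]
  have hz₁ : (1 : Matrix (Fin N) (Fin N) ℚ_[p]) - w₁ = (1 + a) * (1 + b) := by
    rw [hw₁_def]; abel
  have hz₂ : (1 : Matrix (Fin N) (Fin N) ℚ_[p]) - w₂ = 1 + a := by
    rw [hw₂_def]; abel
  have hlog₁ : matLog ((1 + a) * (1 + b)) = -∑' k : ℕ, ((k : ℚ_[p]))⁻¹ • w₁ ^ k := by
    rw [← hz₁, hlog]
  have hlog₂ : matLog (1 + a) = -∑' k : ℕ, ((k : ℚ_[p]))⁻¹ • w₂ ^ k := by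
    rw [← hz₂, hlog]
  have hbound : ∀ (w : Matrix (Fin N) (Fin N) ℚ_[p])
      (hw : Summable (fun k : ℕ => ((k : ℚ_[p]))⁻¹ • w ^ k))
      (hwe : ∀ i j, ‖w i j‖ ≤ (p : ℝ)⁻¹) (i j : Fin N),
      ‖(-∑' k : ℕ, ((k : ℚ_[p]))⁻¹ • w ^ k) i j‖ ≤ 1 := by
    intro w hw hwe i j
    rw [Matrix.neg_apply, norm_neg, entry_eq w hw i j]
    exact IsUltrametricDist.norm_tsum_le_of_forall_le_of_nonneg zero_le_one
      fun k => hterm1 w hwe k i j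
  refine ⟨hsum₁, hsum₂, ?_, ?_, ?_⟩
  · intro i j
    rw [hlog₁]
    exact hbound w₁ hsum₁ hw₁e i j
  · intro i j
    rw [hlog₂]
    exact hbound w₂ hsum₂ hw₂e i j
  · intro i j
    rw [hlog₁, hlog₂, Matrix.neg_apply, Matrix.neg_apply]
    rw [entry_eq w₁ hsum₁ i j, entry_eq w₂ hsum₂ i j]
    have hdiff : (-∑' k : ℕ, (k : ℚ_[p])⁻¹ * (w₁ ^ k) i j)
          - (-∑' k : ℕ, (k : ℚ_[p])⁻¹ * (w₂ ^ k) i j)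
        = -∑' k : ℕ, ((k : ℚ_[p])⁻¹ * (w₁ ^ k) i j - (k : ℚ_[p])⁻¹ * (w₂ ^ k) i j) := by
      rw [Summable.tsum_sub (hesum w₁ hsum₁ i j) (hesum w₂ hsum₂ i j)]
      ring
    rw [hdiff, norm_neg]
    have hgoal : (p : ℝ) ^ (-(n : ℤ)) = ((p : ℝ)⁻¹) ^ n := by
      rw [zpow_neg, zpow_natCast, inv_pow]
    rw [hgoal]
    refine IsUltrametricDist.norm_tsum_le_of_forall_le_of_nonneg (pow_nonneg hr0 n)
      fun k => ?_
    rcases Nat.eq_zero_or_pos k with rfl | hk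
    · simp only [Nat.cast_zero, inv_zero, zero_mul, sub_zero, zero_sub, norm_neg, norm_zero]
      positivity
    · obtain ⟨m, rfl⟩ : ∃ m, k = 1 + m := ⟨k - 1, by omega⟩
      have heq : (((1 + m : ℕ) : ℚ_[p]))⁻¹ * (w₁ ^ (1 + m)) i j
            - (((1 + m : ℕ) : ℚ_[p]))⁻¹ * (w₂ ^ (1 + m)) i j
          = (((1 + m : ℕ) : ℚ_[p]))⁻¹ * ((w₁ ^ (1 + m) - w₂ ^ (1 + m)) i j) := by
        rw [Matrix.sub_apply]; ring
      rw [heq, norm_mul]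
      have h1 : ‖(((1 + m : ℕ) : ℚ_[p]))⁻¹‖ ≤ ((1 + m : ℕ) : ℝ) :=
        norm_inv_natCast_le p (by omega)
      have h2 : ‖(w₁ ^ (1 + m) - w₂ ^ (1 + m)) i j‖ ≤ ((p : ℝ)⁻¹) ^ m * ((p : ℝ)⁻¹) ^ n := by
        have := pow_sub_pow_entry_le hr0 (pow_nonneg hr0 n) hw₁e hw₂e hde m i j
        rwa [Nat.add_comm m 1] at this
      calc ‖(((1 + m : ℕ) : ℚ_[p]))⁻¹‖ * ‖(w₁ ^ (1 + m) - w₂ ^ (1 + m)) i j‖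
          ≤ ((1 + m : ℕ) : ℝ) * (((p : ℝ)⁻¹) ^ m * ((p : ℝ)⁻¹) ^ n) :=
            mul_le_mul h1 h2 (norm_nonneg _) (Nat.cast_nonneg _)
        _ = (((1 + m : ℕ) : ℝ) * ((p : ℝ)⁻¹) ^ m) * ((p : ℝ)⁻¹) ^ n := by ring
        _ ≤ 1 * ((p : ℝ)⁻¹) ^ n := by
            refine mul_le_mul_of_nonneg_right ?_ (pow_nonneg hr0 n)
            rw [inv_pow, ← div_eq_mul_inv, div_le_one (by positivity)]
            have hnat : 1 + m ≤ p ^ m :=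
              le_trans (by simpa [Nat.add_comm] using nat_succ_le_three_pow m)
                (Nat.pow_le_pow_left hp3 m)
            exact_mod_cast hnat
        _ = ((p : ℝ)⁻¹) ^ n := one_mul _
end

section
/- Let p be a prime and r a positive integer with r < p − 1. Let s ∈ gl(r,ℤ_p) be residually nilpotent, so that exp s converges p-adically and lies in GL(r,ℤ_p). Then for every ℤ_p-submodule U of ℤ_p^r (viewing matrices as ℤ_p-linear endomorphisms of ℤ_p^r): s·U ⊆ U if and only if (exp s)·U ⊆ U. -/
/-- The exponential series `∑ zᵏ/k!` of a square matrix over `ℚ_[p]`. -/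
noncomputable def matExp {p : ℕ} [Fact p.Prime] {N : ℕ}
    (z : Matrix (Fin N) (Fin N) ℚ_[p]) : Matrix (Fin N) (Fin N) ℚ_[p] :=
  ∑' k : ℕ, ((k.factorial : ℚ_[p]))⁻¹ • z ^ k

/-- `x ∈ gl(N, ℤ_[p])` is residually nilpotent. -/
def ResNilp {p : ℕ} [Fact p.Prime] {N : ℕ} (x : Matrix (Fin N) (Fin N) ℤ_[p]) : Prop :=
  ∃ m : ℕ, 1 ≤ m ∧ ∀ i j, (p : ℤ_[p]) ∣ (x ^ m) i j

namespace Stmt11Aux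

open Filter Nat



variable {p : ℕ} [Fact p.Prime]

lemma vfac_mul_le (k : ℕ) : (p - 1) * padicValNat p (k !) ≤ k :=
  (sub_one_mul_padicValNat_factorial k).le.trans (Nat.sub_le _ _)

lemma vfac_le_div (k : ℕ) : padicValNat p (k !) ≤ k / (p - 1) := by
  have hp : 1 < p := (Fact.out : p.Prime).one_lt
  rw [Nat.le_div_iff_mul_le (by omega)]
  rw [mul_comm]; exact vfac_mul_le k

variable {r : ℕ} (hr : 1 ≤ r) (hrp : r < p - 1)

include hr hrp in
lemma vfac_le_div_r1 (k : ℕ) : padicValNat p (k !) ≤ k / (r + 1) :=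
  (vfac_le_div k).trans (Nat.div_le_div_left (by omega) (by omega))

include hr hrp in
lemma vfac_le_kr (k : ℕ) : padicValNat p (k !) ≤ k / r :=
  (vfac_le_div_r1 hr hrp k).trans (Nat.div_le_div_left (by omega) (by omega))

include hr hrp in
lemma vfac_shift_le (k : ℕ) : padicValNat p ((k + 2)!) ≤ k / r := by
  have hp : 1 < p := (Fact.out : p.Prime).one_lt
  rcases lt_or_ge (k + 2) p with h | h
  · have : ¬ p ∣ (k + 2)! := by
      intro hd
      exact absurd ((Nat.Prime.dvd_factorial Fact.out).1 hd) (by omega)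
    simp [padicValNat.eq_zero_of_not_dvd this]
  · rcases lt_or_ge (k + 2) (2 * (r + 1)) with h2 | h2
    · have h1 : padicValNat p ((k + 2)!) ≤ (k + 2) / (p - 1) := vfac_le_div _
      have h3 : (k + 2) / (p - 1) ≤ 1 := by
        have : (k + 2) / (p - 1) < 2 := by
          rw [Nat.div_lt_iff_lt_mul (by omega)]; omega
        omega
      have h4 : 1 ≤ k / r := by
        rw [Nat.one_le_div_iff (by omega)]; omega
      omega
    · have h1 : padicValNat p ((k + 2)!) ≤ (k + 2) / (r + 1) := vfac_le_div_r1 hr hrp _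
      refine h1.trans ?_
      rw [Nat.le_div_iff_mul_le (by omega)]
      have hq : ((k + 2) / (r + 1)) * (r + 1) ≤ k + 2 := Nat.div_mul_le_self _ _
      have hq2 : 2 ≤ (k + 2) / (r + 1) := by
        rw [Nat.le_div_iff_mul_le (by omega)]; omega
      nlinarith [hq, hq2]


variable {R : Type*} [CommRing R]

/-- Span of all powers of a matrix. -/
def powSpan {n : ℕ} (x : Matrix (Fin n) (Fin n) R) : Submodule R (Matrix (Fin n) (Fin n) R) :=
  Submodule.span R (Set.range (x ^ ·))

lemma pow_mem_powSpan {n : ℕ} (x : Matrix (Fin n) (Fin n) R) (k : ℕ) :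
    x ^ k ∈ powSpan x :=
  Submodule.subset_span ⟨k, rfl⟩

lemma one_mem_powSpan {n : ℕ} (x : Matrix (Fin n) (Fin n) R) : (1 : Matrix (Fin n) (Fin n) R) ∈ powSpan x := by
  simpa using pow_mem_powSpan x 0

lemma powSpan_pow_mul {n : ℕ} (x : Matrix (Fin n) (Fin n) R) (k : ℕ) {a : Matrix (Fin n) (Fin n) R}
    (ha : a ∈ powSpan x) : x ^ k * a ∈ powSpan x := by
  induction ha using Submodule.span_induction with
  | mem y hy => obtain ⟨m, rfl⟩ := hy; rw [← pow_add]; exact pow_mem_powSpan x _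
  | zero => simpa using Submodule.zero_mem _
  | add y z _ _ hy hz => rw [mul_add]; exact Submodule.add_mem _ hy hz
  | smul c y _ hy => rw [mul_smul_comm]; exact Submodule.smul_mem _ _ hy

lemma powSpan_mul_mem {n : ℕ} (x : Matrix (Fin n) (Fin n) R) {a b : Matrix (Fin n) (Fin n) R}
    (ha : a ∈ powSpan x) (hb : b ∈ powSpan x) : a * b ∈ powSpan x := by
  induction ha using Submodule.span_induction with
  | mem y hy => obtain ⟨m, rfl⟩ := hy; exact powSpan_pow_mul x m hb
  | zero => simpa using Submodule.zero_mem _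
  | add y z _ _ hy hz => rw [add_mul]; exact Submodule.add_mem _ hy hz
  | smul c y _ hy => rw [smul_mul_assoc]; exact Submodule.smul_mem _ _ hy

lemma powSpan_commute {n : ℕ} (x : Matrix (Fin n) (Fin n) R) {a : Matrix (Fin n) (Fin n) R}
    (ha : a ∈ powSpan x) : Commute x a := by
  induction ha using Submodule.span_induction with
  | mem y hy => obtain ⟨m, rfl⟩ := hy; exact (Commute.refl x).pow_right m
  | zero => exact Commute.zero_right x
  | add y z _ _ hy hz => exact hy.add_right hz
  | smul c y _ hy => exact hy.smul_right c

lemma pow_mulVec_mem {n : ℕ} (x : Matrix (Fin n) (Fin n) R)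
    (U : Submodule R (Fin n → R)) (hU : ∀ v ∈ U, x.mulVec v ∈ U) (m : ℕ) :
    ∀ v ∈ U, (x ^ m).mulVec v ∈ U := by
  induction m with
  | zero => intro v hv; simpa using hv
  | succ k ih =>
    intro v hv
    rw [pow_succ, ← Matrix.mulVec_mulVec]
    exact ih _ (hU v hv)

/-- Matrices in the span of powers preserve invariant submodules. -/
lemma powSpan_preserves {n : ℕ} (x : Matrix (Fin n) (Fin n) R)
    (U : Submodule R (Fin n → R)) (hU : ∀ v ∈ U, x.mulVec v ∈ U)
    {a : Matrix (Fin n) (Fin n) R} (ha : a ∈ powSpan x) :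
    ∀ v ∈ U, a.mulVec v ∈ U := by
  induction ha using Submodule.span_induction with
  | mem y hy =>
    obtain ⟨m, rfl⟩ := hy
    exact pow_mulVec_mem x U hU m
  | zero => intro v hv; rw [Matrix.zero_mulVec]; exact Submodule.zero_mem _
  | add y z _ _ hy hz =>
    intro v hv
    rw [Matrix.add_mulVec]
    exact Submodule.add_mem _ (hy v hv) (hz v hv)
  | smul c y _ hy =>
    intro v hv
    rw [Matrix.smul_mulVec]
    exact Submodule.smul_mem _ _ (hy v hv)

section CharPoly

variable {p : ℕ} [Fact p.Prime] {r : ℕ}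

lemma dvd_iff_toZMod_eq_zero (x : ℤ_[p]) : (p : ℤ_[p]) ∣ x ↔ PadicInt.toZMod x = 0 := by
  have h1 : PadicInt.toZMod x = 0 ↔ x ∈ RingHom.ker (PadicInt.toZMod (p := p)) := by
    simp [RingHom.mem_ker]
  rw [h1, PadicInt.ker_toZMod, PadicInt.maximalIdeal_eq_span_p, Ideal.mem_span_singleton]

lemma residue_nilpotent (s : Matrix (Fin r) (Fin r) ℤ_[p])
    {m : ℕ} (hm : ∀ i j, (p : ℤ_[p]) ∣ (s ^ m) i j) :
    IsNilpotent (s.map (PadicInt.toZMod (p := p))) := by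
  refine ⟨m, ?_⟩
  have : s.map (PadicInt.toZMod (p := p)) = (PadicInt.toZMod (p := p)).mapMatrix s := rfl
  rw [this, ← map_pow]
  ext i j
  have := (dvd_iff_toZMod_eq_zero ((s ^ m) i j)).1 (hm i j)
  simpa [RingHom.mapMatrix_apply, Matrix.map_apply] using this

lemma charpoly_residue_eq (s : Matrix (Fin r) (Fin r) ℤ_[p])
    {m : ℕ} (hm : ∀ i j, (p : ℤ_[p]) ∣ (s ^ m) i j) :
    (Matrix.charpoly s).map (PadicInt.toZMod (p := p)) = Polynomial.X ^ r := by
  have h1 := Matrix.isNilpotent_charpoly_sub_pow_of_isNilpotent (residue_nilpotent s hm)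
  have h2 : (s.map (PadicInt.toZMod (p := p))).charpoly
      = (Matrix.charpoly s).map (PadicInt.toZMod (p := p)) :=
    Matrix.charpoly_map s _
  rw [h2, Fintype.card_fin] at h1
  have h3 := h1.eq_zero
  exact sub_eq_zero.1 h3

/-- The Cayley–Hamilton relation with `p`-divisible coefficients. -/
lemma exists_charpoly_rel (hr : 1 ≤ r) (s : Matrix (Fin r) (Fin r) ℤ_[p])
    {m : ℕ} (hm : ∀ i j, (p : ℤ_[p]) ∣ (s ^ m) i j) :
    ∃ b : ℕ → ℤ_[p], (∀ i, (p : ℤ_[p]) ∣ b i) ∧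
      s ^ r = ∑ i ∈ Finset.range r, b i • s ^ i := by
  classical
  set χ := Matrix.charpoly s with hχ
  set q : Polynomial ℤ_[p] := χ - Polynomial.X ^ r with hq
  have hdeg : χ.natDegree = r := by
    rw [hχ, Matrix.charpoly_natDegree_eq_dim, Fintype.card_fin]
  have hmq : q.map (PadicInt.toZMod (p := p)) = 0 := by
    rw [hq, Polynomial.map_sub, Polynomial.map_pow, Polynomial.map_X,
      charpoly_residue_eq s hm, sub_self]
  have hqdeg : q.natDegree < r := by
    by_cases h0 : q = 0
    · rw [h0]; simpa using (show 0 < r by omega)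
    · have : q.degree < χ.degree := by
        apply Polynomial.degree_sub_lt
        · rw [Polynomial.degree_X_pow, Polynomial.degree_eq_natDegree
            (Matrix.charpoly_monic s).ne_zero, hdeg]
        · exact (Matrix.charpoly_monic s).ne_zero
        · rw [Polynomial.leadingCoeff_X_pow, (Matrix.charpoly_monic s).leadingCoeff]
      have hlt : q.degree < (r : ℕ) := by
        rwa [Polynomial.degree_eq_natDegree (Matrix.charpoly_monic s).ne_zero, hdeg] at this
      exact (Polynomial.natDegree_lt_iff_degree_lt h0).2 hlt
  have hCH : Polynomial.aeval s χ = 0 := Matrix.aeval_self_charpoly s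
  have hsplit : χ = Polynomial.X ^ r + q := by rw [hq]; ring
  have h1 : s ^ r + Polynomial.aeval s q = 0 := by
    have := hCH
    rw [hsplit] at this
    simpa using this
  have h2 : Polynomial.aeval s q = ∑ i ∈ Finset.range r, q.coeff i • s ^ i :=
    Polynomial.aeval_eq_sum_range' hqdeg s
  refine ⟨fun i => -(q.coeff i), fun i => ?_, ?_⟩
  · rw [dvd_iff_toZMod_eq_zero, map_neg, neg_eq_zero]
    have : (q.map (PadicInt.toZMod (p := p))).coeff i = PadicInt.toZMod (q.coeff i) := by
      rw [Polynomial.coeff_map]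
    rw [← this, hmq, Polynomial.coeff_zero]
  · have h3 : s ^ r = -Polynomial.aeval s q := eq_neg_of_add_eq_zero_left h1
    rw [h3, h2, neg_eq_iff_eq_neg, ← Finset.sum_neg_distrib]
    exact Finset.sum_congr rfl fun i _ => by rw [neg_smul, neg_neg]

end CharPoly

section PowDiv

variable {p : ℕ} [Fact p.Prime] {r : ℕ}

lemma exists_w (hr : 1 ≤ r) (s : Matrix (Fin r) (Fin r) ℤ_[p])
    {m : ℕ} (hm : ∀ i j, (p : ℤ_[p]) ∣ (s ^ m) i j) :
    ∃ w ∈ powSpan s, s ^ r = (p : ℤ_[p]) • w := by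
  obtain ⟨b, hb, hrel⟩ := exists_charpoly_rel hr s hm
  have hd : ∀ i, ∃ d : ℤ_[p], b i = (p : ℤ_[p]) * d := fun i => hb i
  choose d hdd using hd
  refine ⟨∑ i ∈ Finset.range r, d i • s ^ i, ?_, ?_⟩
  · exact Submodule.sum_mem _ fun i _ => Submodule.smul_mem _ _ (pow_mem_powSpan s i)
  · rw [hrel, Finset.smul_sum]
    exact Finset.sum_congr rfl fun i _ => by rw [smul_smul, ← hdd i]

lemma pow_div (hr : 1 ≤ r) (s : Matrix (Fin r) (Fin r) ℤ_[p])
    {m : ℕ} (hm : ∀ i j, (p : ℤ_[p]) ∣ (s ^ m) i j) (k : ℕ) :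
    ∃ a ∈ powSpan s, s ^ k = ((p : ℤ_[p]) ^ (k / r)) • a := by
  obtain ⟨w, hwA, hw⟩ := exists_w hr s hm
  induction k using Nat.strong_induction_on with
  | _ k ih =>
    rcases lt_or_ge k r with hkr | hkr
    · refine ⟨s ^ k, pow_mem_powSpan s k, ?_⟩
      rw [Nat.div_eq_of_lt hkr, pow_zero, one_smul]
    · obtain ⟨a, haA, ha⟩ := ih (k - r) (by omega)
      refine ⟨a * w, powSpan_mul_mem s haA hwA, ?_⟩
      have hk : k = (k - r) + r := by omega
      rw [hk, pow_add, ha, hw, smul_mul_assoc, mul_smul_comm, smul_smul, ← pow_succ]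
      have : (k - r) / r + 1 = ((k - r) + r) / r := by
        rw [Nat.add_div_right _ (by omega)]
      rw [this]

/-- Key integrality: `s ^ k / m!` exists in the span of powers of `s`,
with an entrywise norm bound. -/
lemma exists_c (hr : 1 ≤ r) (s : Matrix (Fin r) (Fin r) ℤ_[p])
    {m₀ : ℕ} (hm : ∀ i j, (p : ℤ_[p]) ∣ (s ^ m₀) i j) (k m : ℕ)
    (hv : padicValNat p (m !) ≤ k / r) :
    ∃ c ∈ powSpan s, ((m ! : ℕ) : ℤ_[p]) • c = s ^ k ∧
      ∀ i j, ‖c i j‖ ≤ (p : ℝ) ^ (-((k / r : ℕ) : ℤ) + (padicValNat p (m !) : ℤ)) := by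
  obtain ⟨a, haA, ha⟩ := pow_div hr s hm k
  set n := k / r
  set v := padicValNat p (m !) with hvdef
  -- factor m! = p^v * m₁ with m₁ a unit
  set m₁ : ℕ := m ! / p ^ v with hm₁
  have hfac : p ^ v * m₁ = m ! := by
    have h := Nat.ordProj_mul_ordCompl_eq_self (m !) p
    rwa [Nat.factorization_def _ (Fact.out : p.Prime)] at h
  have hm₁0 : ¬ p ∣ m₁ := by
    have := Nat.not_dvd_ordCompl (Fact.out : p.Prime) (Nat.factorial_ne_zero m)
    rwa [Nat.factorization_def _ (Fact.out : p.Prime)] at this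
  have hunit : IsUnit ((m₁ : ℕ) : ℤ_[p]) := by
    rw [PadicInt.isUnit_iff]
    have hle : ‖((m₁ : ℕ) : ℤ_[p])‖ ≤ 1 := PadicInt.norm_le_one _
    have : ¬ ‖((m₁ : ℕ) : ℤ_[p])‖ < 1 := by
      intro hlt
      have : (p : ℤ) ∣ (m₁ : ℤ) := by
        rw [← PadicInt.norm_int_lt_one_iff_dvd]
        exact_mod_cast hlt
      exact hm₁0 (by exact_mod_cast this)
    linarith [lt_or_eq_of_le hle]
  obtain ⟨u, hu⟩ := hunit
  have hvn : v ≤ n := hv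
  refine ⟨((p : ℤ_[p]) ^ (n - v)) • (((u⁻¹ : ℤ_[p]ˣ) : ℤ_[p]) • a), ?_, ?_, ?_⟩
  · exact Submodule.smul_mem _ _ (Submodule.smul_mem _ _ haA)
  · have hcast : ((m ! : ℕ) : ℤ_[p]) = (p : ℤ_[p]) ^ v * ((m₁ : ℕ) : ℤ_[p]) := by
      rw [← hfac]; push_cast; ring
    rw [hcast, ha, smul_smul, smul_smul]
    congr 1
    have hpv : (p : ℤ_[p]) ^ v * (p : ℤ_[p]) ^ (n - v) = (p : ℤ_[p]) ^ n := by
      rw [← pow_add]; congr 1; omega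
    rw [← hu]
    calc (p : ℤ_[p]) ^ v * (u : ℤ_[p]) * (p : ℤ_[p]) ^ (n - v) * ((u⁻¹ : ℤ_[p]ˣ) : ℤ_[p])
        = ((p : ℤ_[p]) ^ v * (p : ℤ_[p]) ^ (n - v)) * ((u : ℤ_[p]) * ((u⁻¹ : ℤ_[p]ˣ) : ℤ_[p])) := by
          ring
      _ = (p : ℤ_[p]) ^ n := by rw [hpv, u.mul_inv, mul_one]
  · intro i j
    have h1 : (((p : ℤ_[p]) ^ (n - v)) • (((u⁻¹ : ℤ_[p]ˣ) : ℤ_[p]) • a)) i j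
        = (p : ℤ_[p]) ^ (n - v) * (((u⁻¹ : ℤ_[p]ˣ) : ℤ_[p]) * a i j) := rfl
    rw [h1, norm_mul, norm_mul]
    have h2 : ‖(p : ℤ_[p]) ^ (n - v)‖ = (p : ℝ) ^ (-((n - v : ℕ) : ℤ)) := by
      exact PadicInt.norm_p_pow _
    have h3 : ‖((u⁻¹ : ℤ_[p]ˣ) : ℤ_[p])‖ = 1 := PadicInt.norm_units _
    have h4 : ‖a i j‖ ≤ 1 := PadicInt.norm_le_one _
    have h5 : (-((n - v : ℕ) : ℤ)) = -(n : ℤ) + (v : ℤ) := by omega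
    calc ‖(p : ℤ_[p]) ^ (n - v)‖ * (‖((u⁻¹ : ℤ_[p]ˣ) : ℤ_[p])‖ * ‖a i j‖)
        ≤ ‖(p : ℤ_[p]) ^ (n - v)‖ * 1 := by
          apply mul_le_mul_of_nonneg_left _ (norm_nonneg _)
          rw [h3, one_mul]; exact h4
      _ = (p : ℝ) ^ (-(n : ℤ) + (v : ℤ)) := by rw [mul_one, h2, h5]

end PowDiv

section Topology

variable {p : ℕ} [Fact p.Prime] {r : ℕ}

lemma powSpan_eq_finSpan (hr : 1 ≤ r) (s : Matrix (Fin r) (Fin r) ℤ_[p])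
    {m : ℕ} (hm : ∀ i j, (p : ℤ_[p]) ∣ (s ^ m) i j) :
    powSpan s = Submodule.span ℤ_[p] (Set.range fun j : Fin r => s ^ (j : ℕ)) := by
  obtain ⟨b, _, hrel⟩ := exists_charpoly_rel hr s hm
  apply le_antisymm
  · rw [powSpan, Submodule.span_le]
    rintro x ⟨k, rfl⟩
    show s ^ k ∈ _
    induction k using Nat.strong_induction_on with
    | _ k ih =>
      rcases lt_or_ge k r with hkr | hkr
      · exact Submodule.subset_span ⟨⟨k, hkr⟩, rfl⟩
      · have hsk : s ^ k = s ^ (k - r) * s ^ r := by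
          rw [← pow_add]; congr 1; omega
        have : s ^ k = ∑ i ∈ Finset.range r, b i • s ^ (k - r + i) := by
          rw [hsk, hrel, Finset.mul_sum]
          exact Finset.sum_congr rfl fun i _ => by
            rw [mul_smul_comm, ← pow_add]
        rw [this]
        exact Submodule.sum_mem _ fun i hi => by
          have hir : i < r := Finset.mem_range.1 hi
          exact Submodule.smul_mem _ _ (ih (k - r + i) (by omega))
  · rw [Submodule.span_le]
    rintro x ⟨j, rfl⟩
    exact pow_mem_powSpan s _

lemma finSpan_isClosed (s : Matrix (Fin r) (Fin r) ℤ_[p]) :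
    IsClosed ((Submodule.span ℤ_[p] (Set.range fun j : Fin r => s ^ (j : ℕ)) :
      Submodule ℤ_[p] (Matrix (Fin r) (Fin r) ℤ_[p])) : Set (Matrix (Fin r) (Fin r) ℤ_[p])) := by
  classical
  set Phi : (Fin r → ℤ_[p]) → Matrix (Fin r) (Fin r) ℤ_[p] :=
    fun c => ∑ j : Fin r, c j • s ^ (j : ℕ) with hPhi
  have hcont : Continuous Phi := by
    apply continuous_finset_sum
    intro j _
    exact (continuous_apply j).smul continuous_const
  have hrange : Set.range Phi = ((Submodule.span ℤ_[p]
      (Set.range fun j : Fin r => s ^ (j : ℕ)) :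
      Submodule ℤ_[p] (Matrix (Fin r) (Fin r) ℤ_[p])) : Set (Matrix (Fin r) (Fin r) ℤ_[p])) := by
    ext x
    simp only [Set.mem_range, SetLike.mem_coe]
    rw [Submodule.mem_span_range_iff_exists_fun]
  rw [← hrange]
  have : Set.range Phi = Phi '' Set.univ := (Set.image_univ).symm
  rw [this]
  exact (isCompact_univ.image hcont).isClosed

lemma summable_of_bound (f : ℕ → Matrix (Fin r) (Fin r) ℤ_[p]) (g : ℕ → ℝ)
    (hb : ∀ k i j, ‖f k i j‖ ≤ g k) (hg : Filter.Tendsto g Filter.atTop (nhds 0)) :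
    Summable f := by
  have : ∀ (i j : Fin r), Summable fun k => f k i j := by
    intro i j
    apply NonarchimedeanAddGroup.summable_of_tendsto_cofinite_zero
    rw [Nat.cofinite_eq_atTop]
    apply squeeze_zero_norm (fun k => hb k i j) hg
  exact Pi.summable.2 fun i => Pi.summable.2 fun j => this i j

end Topology

section Tendsto

variable {p : ℕ} [Fact p.Prime] {r : ℕ}

/-- The exponent gap tends to infinity. -/
lemma gap_tendsto (hr : 1 ≤ r) :
    Filter.Tendsto (fun k : ℕ => k / r - (k / (r + 1) + 1)) Filter.atTop Filter.atTop := by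
  apply Filter.tendsto_atTop_atTop.2
  intro b
  refine ⟨(b + r + 1) * (r * (r + 1)), fun k hk => ?_⟩
  have hd0 : 0 < r * (r + 1) := by positivity
  set d := r * (r + 1) with hd
  set q := k / d with hqdef
  have hq : b + r + 1 ≤ q := by
    rw [hqdef, Nat.le_div_iff_mul_le hd0]; exact hk
  have hq1 : q * r + q ≤ k / r := by
    rw [Nat.le_div_iff_mul_le (by omega)]
    have h1 : q * d ≤ k := Nat.div_mul_le_self k d
    have h2 : (q * r + q) * r ≤ q * d := by rw [hd]; ring_nf; nlinarith
    omega
  have hq2 : k / (r + 1) + 1 ≤ q * r + r := by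
    have hk2 : k < (q + 1) * d := (Nat.div_lt_iff_lt_mul hd0).1 (Nat.lt_succ_self q)
    have h3 : k / (r + 1) < (q + 1) * r := by
      rw [Nat.div_lt_iff_lt_mul (by omega)]
      have : (q + 1) * d = (q + 1) * r * (r + 1) := by rw [hd]; ring
      omega
    have h4 : (q + 1) * r = q * r + r := by ring
    omega
  set X := q * r with hX
  omega

lemma bound_tendsto (hr : 1 ≤ r) :
    Filter.Tendsto (fun k : ℕ => ((p : ℝ)⁻¹) ^ (k / r - (k / (r + 1) + 1))) Filter.atTop (nhds 0) := by
  have hp : 1 < p := (Fact.out : p.Prime).one_lt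
  have h0 : (0:ℝ) ≤ (p:ℝ)⁻¹ := by positivity
  have h1 : (p:ℝ)⁻¹ < 1 := by
    rw [inv_lt_one_iff₀]; right; exact_mod_cast hp
  exact (tendsto_pow_atTop_nhds_zero_of_lt_one h0 h1).comp (gap_tendsto hr)

end Tendsto

section Helpers

variable {p : ℕ} [Fact p.Prime] {r : ℕ}

lemma norm_le_helper (x : ℤ_[p]) (a v b : ℕ)
    (hx : ‖x‖ ≤ (p : ℝ) ^ (-(a : ℤ) + (v : ℤ))) (hv : v ≤ b) :
    ‖x‖ ≤ ((p : ℝ)⁻¹) ^ (a - b) := by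
  have hp : 1 < p := (Fact.out : p.Prime).one_lt
  have hp1 : (1:ℝ) ≤ (p:ℝ) := by exact_mod_cast hp.le
  rcases le_or_gt a b with h | h
  · rw [Nat.sub_eq_zero_of_le h, pow_zero]
    exact PadicInt.norm_le_one x
  · have h2 : ((p:ℝ)⁻¹) ^ (a - b) = (p:ℝ) ^ (-(a:ℤ) + (b:ℤ)) := by
      rw [inv_pow, ← zpow_natCast, ← zpow_neg]
      congr 1
      omega
    rw [h2]
    exact hx.trans (zpow_le_zpow_right₀ hp1 (by omega))

lemma fac_smul_cancel (m : ℕ) {x y : Matrix (Fin r) (Fin r) ℤ_[p]}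
    (h : ((m ! : ℕ) : ℤ_[p]) • x = ((m ! : ℕ) : ℤ_[p]) • y) : x = y := by
  ext i j
  have h1 := congrFun (congrFun h i) j
  have h2 : ((m ! : ℕ) : ℤ_[p]) * x i j = ((m ! : ℕ) : ℤ_[p]) * y i j := h1
  exact mul_left_cancel₀ (Nat.cast_ne_zero.2 m.factorial_ne_zero) h2

variable {R : Type*} [CommRing R]

lemma powSpan_pow_mem {n : ℕ} (x : Matrix (Fin n) (Fin n) R) {a : Matrix (Fin n) (Fin n) R}
    (ha : a ∈ powSpan x) (k : ℕ) : a ^ k ∈ powSpan x := by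
  induction k with
  | zero => simpa using one_mem_powSpan x
  | succ i ih => rw [pow_succ]; exact powSpan_mul_mem x ih ha

/-- `(1 + x)^k = 1 + x * γ` for some `γ` in the span. -/
lemma one_add_pow {n : ℕ} (s : Matrix (Fin n) (Fin n) R) {x : Matrix (Fin n) (Fin n) R}
    (hx : x ∈ powSpan s) (k : ℕ) :
    ∃ γ ∈ powSpan s, (1 + x) ^ k = 1 + x * γ := by
  induction k with
  | zero => exact ⟨0, Submodule.zero_mem _, by simp⟩
  | succ i ih =>
    obtain ⟨γ, hγ, hgi⟩ := ih
    refine ⟨1 + γ + γ * x, ?_, ?_⟩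
    · exact Submodule.add_mem _ (Submodule.add_mem _ (one_mem_powSpan s) hγ)
        (powSpan_mul_mem s hγ hx)
    · rw [pow_succ, hgi]
      noncomm_ring

end Helpers

section Converse

variable {p : ℕ} [Fact p.Prime] {r : ℕ}

lemma s_mem_powSpan_E (hr : 1 ≤ r) (s ψ E : Matrix (Fin r) (Fin r) ℤ_[p])
    {m : ℕ} (hm : ∀ i j, (p : ℤ_[p]) ∣ (s ^ m) i j)
    (hψ : ψ ∈ powSpan s) (hE : E = 1 + s + s ^ 2 * ψ) :
    s ∈ powSpan E := by
  classical
  set A := powSpan s with hA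
  set B := powSpan E with hB
  set I : Ideal ℤ_[p] := Ideal.span {(p : ℤ_[p])} with hI
  set W : Submodule ℤ_[p] (Matrix (Fin r) (Fin r) ℤ_[p]) := B ⊔ (I • A) with hW
  -- multiplication by elements of A preserves I • A
  have hIA_mul : ∀ a ∈ A, ∀ x ∈ I • A, a * x ∈ I • A := by
    intro a ha x hx
    refine Submodule.smul_induction_on hx (fun t ht n hn => ?_) (fun x y hx' hy' => ?_)
    · rw [mul_smul_comm]
      exact Submodule.smul_mem_smul ht (powSpan_mul_mem s ha hn)
    · rw [mul_add]; exact Submodule.add_mem _ hx' hy'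
  -- high powers of s are in I • A
  obtain ⟨w, hwA, hw⟩ := exists_w hr s hm
  have h_high : ∀ k, r ≤ k → s ^ k ∈ I • A := by
    intro k hk
    have h1 : s ^ r ∈ I • A := by
      rw [hw]
      exact Submodule.smul_mem_smul (Ideal.mem_span_singleton_self _) hwA
    have h2 : s ^ k = s ^ (k - r) * s ^ r := by rw [← pow_add]; congr 1; omega
    rw [h2]
    exact hIA_mul _ (pow_mem_powSpan s _) _ h1
  -- identity E - 1 = s * (1 + s * ψ)
  have hE1 : E - 1 = s * (1 + s * ψ) := by
    rw [hE]; noncomm_ring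
  have hcomm : Commute s ψ := powSpan_commute s hψ
  have hsψA : s * ψ ∈ A := powSpan_mul_mem s (by simpa using pow_mem_powSpan s 1) hψ
  have hcomm2 : Commute s (1 + s * ψ) :=
    (Commute.one_right s).add_right ((Commute.refl s).mul_right hcomm)
  -- the descending induction
  have h_all : ∀ t k, 1 ≤ k → r ≤ k + t → s ^ k ∈ W := by
    intro t
    induction t with
    | zero =>
      intro k hk1 hkr
      exact Submodule.mem_sup_right (h_high k (by omega))
    | succ t ih =>
      intro k hk1 hkt
      rcases le_or_gt r k with hrk | hrk
      · exact Submodule.mem_sup_right (h_high k hrk)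
      · -- binomial expansion
        obtain ⟨γ, hγA, hγ⟩ := one_add_pow s hsψA k
        have hkey : (E - 1) ^ k = s ^ k + s ^ (k + 1) * (ψ * γ) := by
          rw [hE1, hcomm2.mul_pow, hγ]
          have : s ^ k * (1 + s * ψ * γ) = s ^ k + s ^ k * (s * (ψ * γ)) := by
            noncomm_ring
          rw [this]
          congr 1
          rw [← mul_assoc, ← pow_succ]
        have hEB : (E - 1) ^ k ∈ B := by
          apply powSpan_pow_mem
          exact Submodule.sub_mem _ (by simpa using pow_mem_powSpan E 1) (one_mem_powSpan E)
        have htail : ∀ a ∈ A, s ^ (k + 1) * a ∈ W := by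
          intro a ha
          induction ha using Submodule.span_induction with
          | mem y hy =>
            obtain ⟨j, rfl⟩ := hy
            rw [← pow_add]
            exact ih (k + 1 + j) (by omega) (by omega)
          | zero => rw [mul_zero]; exact Submodule.zero_mem _
          | add y z _ _ hy hz => rw [mul_add]; exact Submodule.add_mem _ hy hz
          | smul c y _ hy => rw [mul_smul_comm]; exact Submodule.smul_mem _ _ hy
        have hs_eq : s ^ k = (E - 1) ^ k - s ^ (k + 1) * (ψ * γ) := by
          rw [hkey]; ring_nf
          noncomm_ring
        rw [hs_eq]
        exact Submodule.sub_mem _ (Submodule.mem_sup_left hEB)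
          (htail _ (powSpan_mul_mem s hψ hγA))
  -- A ≤ W
  have hAW : A ≤ W := by
    rw [hA, powSpan, Submodule.span_le]
    rintro x ⟨k, rfl⟩
    show s ^ k ∈ W
    rcases Nat.eq_zero_or_pos k with rfl | hk
    · exact Submodule.mem_sup_left (by simpa using one_mem_powSpan E)
    · exact h_all r k hk (by omega)
  -- Nakayama
  have hAfg : A.FG := by
    rw [hA, powSpan_eq_finSpan hr s hm]
    exact Submodule.fg_span (Set.finite_range _)
  set N : Submodule ℤ_[p] (Matrix (Fin r) (Fin r) ℤ_[p] ⧸ B) := A.map B.mkQ with hN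
  have hBmap : B.map B.mkQ = ⊥ := by
    rw [eq_bot_iff]
    rintro x ⟨y, hy, rfl⟩
    rw [Submodule.mem_bot, Submodule.mkQ_apply, Submodule.Quotient.mk_eq_zero]
    exact hy
  have hNle : N ≤ I • N := by
    calc N ≤ W.map B.mkQ := Submodule.map_mono hAW
      _ = B.map B.mkQ ⊔ (I • A).map B.mkQ := Submodule.map_sup _ _ _
      _ = ⊥ ⊔ I • N := by rw [hBmap, Submodule.map_smul'']
      _ = I • N := bot_sup_eq _
  have hjac : I ≤ Ideal.jacobson ⊥ := by
    rw [IsLocalRing.jacobson_eq_maximalIdeal ⊥ bot_ne_top, PadicInt.maximalIdeal_eq_span_p]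
  have hNbot : N = ⊥ := Submodule.eq_bot_of_le_smul_of_le_jacobson_bot I N (hAfg.map _) hNle hjac
  have hsA : s ∈ A := by simpa using pow_mem_powSpan s 1
  have : B.mkQ s ∈ N := Submodule.mem_map_of_mem hsA
  rw [hNbot, Submodule.mem_bot, Submodule.mkQ_apply, Submodule.Quotient.mk_eq_zero] at this
  exact this

end Converse

section Main

variable {p : ℕ} [Fact p.Prime] {r : ℕ}

set_option maxHeartbeats 1000000 in
theorem main_test (hr : 1 ≤ r) (hrp : r < p - 1)
    (s : Matrix (Fin r) (Fin r) ℤ_[p])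
    {m : ℕ} (hm : ∀ i j, (p : ℤ_[p]) ∣ (s ^ m) i j) :
    Summable (fun k : ℕ => ((k.factorial : ℚ_[p]))⁻¹ • (s.map (fun a => (a : ℚ_[p]))) ^ k) ∧
    ∃ E : Matrix (Fin r) (Fin r) ℤ_[p], IsUnit E ∧
      E.map (fun a => (a : ℚ_[p])) = ∑' k : ℕ, ((k.factorial : ℚ_[p]))⁻¹ • (s.map (fun a => (a : ℚ_[p]))) ^ k ∧
      ∀ U : Submodule ℤ_[p] (Fin r → ℤ_[p]),
        ((∀ v ∈ U, s.mulVec v ∈ U) ↔ (∀ v ∈ U, E.mulVec v ∈ U)) := by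
  classical
  have hp : 1 < p := (Fact.out : p.Prime).one_lt
  -- the integral coefficient families
  have hc0' : ∀ k : ℕ, ∃ c ∈ powSpan s, ((k ! : ℕ) : ℤ_[p]) • c = s ^ k ∧
      ∀ i j, ‖c i j‖ ≤ (p : ℝ) ^ (-((k / r : ℕ) : ℤ) + (padicValNat p (k !) : ℤ)) :=
    fun k => exists_c hr s hm k k (vfac_le_kr hr hrp k)
  choose c hcA hcEq hcB using hc0'
  have he0' : ∀ k : ℕ, ∃ e ∈ powSpan s, (((k + 2)! : ℕ) : ℤ_[p]) • e = s ^ k ∧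
      ∀ i j, ‖e i j‖ ≤ (p : ℝ) ^ (-((k / r : ℕ) : ℤ) + (padicValNat p ((k + 2)!) : ℤ)) :=
    fun k => exists_c hr s hm k (k + 2) (vfac_shift_le hr hrp k)
  choose e heA heEq heB using he0'
  -- uniform bounds
  set G : ℕ → ℝ := fun k => ((p : ℝ)⁻¹) ^ (k / r - (k / (r + 1) + 1)) with hG
  have hGc : ∀ k i j, ‖c k i j‖ ≤ G k := by
    intro k i j
    exact norm_le_helper _ (k / r) _ (k / (r + 1) + 1) (hcB k i j)
      ((vfac_le_div_r1 hr hrp k).trans (by omega))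
  have hGe : ∀ k i j, ‖e k i j‖ ≤ G k := by
    intro k i j
    apply norm_le_helper _ (k / r) _ (k / (r + 1) + 1) (heB k i j)
    have h1 : padicValNat p ((k + 2)!) ≤ (k + 2) / (r + 1) := vfac_le_div_r1 hr hrp (k + 2)
    have h2 : (k + 2) / (r + 1) ≤ (k + (r + 1)) / (r + 1) :=
      Nat.div_le_div_right (by omega)
    have h3 : (k + (r + 1)) / (r + 1) = k / (r + 1) + 1 := Nat.add_div_right k (by omega)
    omega
  -- summability
  have hSc : Summable c := summable_of_bound c G hGc (bound_tendsto hr)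
  have hSe : Summable e := summable_of_bound e G hGe (bound_tendsto hr)
  set E := ∑' k, c k with hEdef
  set ψ := ∑' k, e k with hψdef
  have hclosed : IsClosed ((powSpan s : Submodule ℤ_[p] _) :
      Set (Matrix (Fin r) (Fin r) ℤ_[p])) := by
    rw [powSpan_eq_finSpan hr s hm]
    exact finSpan_isClosed s
  have hEA : E ∈ powSpan s := by
    refine hclosed.mem_of_tendsto hSc.hasSum (Filter.Eventually.of_forall fun F => ?_)
    exact Submodule.sum_mem _ fun k _ => hcA k
  have hψA : ψ ∈ powSpan s := by
    refine hclosed.mem_of_tendsto hSe.hasSum (Filter.Eventually.of_forall fun F => ?_)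
    exact Submodule.sum_mem _ fun k _ => heA k
  -- identify the first coefficients
  have hc0 : c 0 = 1 := by
    apply fac_smul_cancel 0
    rw [hcEq 0]
    simp
  have hc1 : c 1 = s := by
    apply fac_smul_cancel 1
    rw [hcEq 1]
    simp
  have hce : ∀ k, c (k + 2) = s ^ 2 * e k := by
    intro k
    apply fac_smul_cancel (k + 2)
    rw [hcEq, ← mul_smul_comm, heEq, ← pow_add]
    congr 1
    omega
  -- E = 1 + s + s^2 ψ
  have hshift : HasSum (fun k => c (k + 2)) (E - (c 0 + c 1)) := by
    apply (hasSum_nat_add_iff 2).2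
    have : E - (c 0 + c 1) + ∑ i ∈ Finset.range 2, c i = E := by
      rw [Finset.sum_range_succ, Finset.sum_range_one]
      abel
    rw [this]
    exact hSc.hasSum
  have hmulsum : HasSum (fun k => s ^ 2 * e k) (s ^ 2 * ψ) := by
    have := hSe.hasSum.map (AddMonoidHom.mulLeft (s ^ 2))
      (continuous_const.mul continuous_id)
    simpa [Function.comp_def] using this
  have hE2 : E - (c 0 + c 1) = s ^ 2 * ψ := by
    refine HasSum.unique hshift ?_
    have hfe : (fun k => c (k + 2)) = fun k => s ^ 2 * e k := funext fun k => hce k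
    rw [hfe]
    exact hmulsum
  rw [hc0, hc1] at hE2
  have hEeq : E = 1 + s + s ^ 2 * ψ := by
    have h := sub_eq_iff_eq_add.1 hE2
    rw [h]; abel
  -- E is a unit
  have hEunit : IsUnit E := by
    set F := (PadicInt.toZMod (p := p)).mapMatrix
      (m := Fin r) with hF
    have hFs : (F s) ^ m = 0 := by
      rw [← map_pow]
      ext i j
      have := (dvd_iff_toZMod_eq_zero ((s ^ m) i j)).1 (hm i j)
      simpa [hF, RingHom.mapMatrix_apply, Matrix.map_apply] using this
    have hFψ : Commute (F s) (F ψ) := (powSpan_commute s hψA).map F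
    have hFcomm : Commute (F s) (1 + F s * F ψ) :=
      (Commute.one_right (F s)).add_right ((Commute.refl (F s)).mul_right hFψ)
    have hxnil : IsNilpotent (F s * (1 + F s * F ψ)) :=
      ⟨m, by rw [hFcomm.mul_pow, hFs, zero_mul]⟩
    have hFE : F E = 1 + F s * (1 + F s * F ψ) := by
      rw [hEeq]
      simp only [map_add, map_one, map_mul, map_pow]
      noncomm_ring
    have hunit1 : IsUnit (F E) := by
      rw [hFE]
      exact IsNilpotent.isUnit_one_add hxnil
    have hdet : IsUnit (F E).det := (Matrix.isUnit_iff_isUnit_det _).1 hunit1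
    haveI : Fact (1 < p) := ⟨hp⟩
    have hdet2 : PadicInt.toZMod E.det ≠ 0 := by
      rw [RingHom.map_det]
      exact hdet.ne_zero
    have hdetu : IsUnit E.det := by
      by_contra h
      have hmem : E.det ∈ IsLocalRing.maximalIdeal ℤ_[p] := by
        rw [IsLocalRing.mem_maximalIdeal]
        exact h
      rw [PadicInt.maximalIdeal_eq_span_p, Ideal.mem_span_singleton] at hmem
      exact hdet2 ((dvd_iff_toZMod_eq_zero _).1 hmem)
    exact (Matrix.isUnit_iff_isUnit_det E).2 hdetu
  -- the p-adic exponential sums to `matQ E`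
  set FQ := (PadicInt.Coe.ringHom (p := p)).mapMatrix (m := Fin r) with hFQ
  have hFQcont : Continuous (FQ : Matrix (Fin r) (Fin r) ℤ_[p] → Matrix (Fin r) (Fin r) ℚ_[p]) := by
    apply continuous_matrix
    intro i j
    have h1 : (fun X : Matrix (Fin r) (Fin r) ℤ_[p] => (FQ X) i j)
        = fun X => ((X i j : ℤ_[p]) : ℚ_[p]) := rfl
    rw [h1]
    exact continuous_subtype_val.comp ((continuous_apply j).comp (continuous_apply i))
  have hsmulQ : ∀ (z : ℤ_[p]) (X : Matrix (Fin r) (Fin r) ℤ_[p]),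
      FQ (z • X) = (z : ℚ_[p]) • FQ X := by
    intro z X
    ext i j
    have h1 : (FQ (z • X)) i j = ((z * X i j : ℤ_[p]) : ℚ_[p]) := rfl
    have h2 : ((z : ℚ_[p]) • FQ X) i j = (z : ℚ_[p]) * ((X i j : ℤ_[p]) : ℚ_[p]) := rfl
    rw [h1, h2, PadicInt.coe_mul]
  have hQsum : HasSum (fun k => FQ (c k)) (FQ E) := hSc.hasSum.map FQ hFQcont
  have hterm : ∀ k : ℕ, FQ (c k)
      = ((k.factorial : ℚ_[p]))⁻¹ • (s.map (fun a => (a : ℚ_[p]))) ^ k := by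
    intro k
    have h1 := congrArg FQ (hcEq k)
    rw [hsmulQ] at h1
    have h2 : (((k ! : ℕ) : ℤ_[p]) : ℚ_[p]) = ((k ! : ℕ) : ℚ_[p]) := by push_cast; rfl
    rw [h2] at h1
    have h3 : FQ (s ^ k) = (FQ s) ^ k := map_pow _ _ _
    rw [h3] at h1
    have h4 : FQ s = s.map (fun a => (a : ℚ_[p])) := rfl
    rw [h4] at h1
    have hne : ((k ! : ℕ) : ℚ_[p]) ≠ 0 := Nat.cast_ne_zero.2 k.factorial_ne_zero
    calc FQ (c k) = ((k ! : ℕ) : ℚ_[p])⁻¹ • (((k ! : ℕ) : ℚ_[p]) • FQ (c k)) := by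
          rw [inv_smul_smul₀ hne]
      _ = ((k.factorial : ℚ_[p]))⁻¹ • (s.map (fun a => (a : ℚ_[p]))) ^ k := by rw [h1]
  have hQsum2 : HasSum (fun k : ℕ => ((k.factorial : ℚ_[p]))⁻¹
      • (s.map (fun a => (a : ℚ_[p]))) ^ k) (FQ E) := by
    have hfe : (fun k => FQ (c k)) = fun k : ℕ => ((k.factorial : ℚ_[p]))⁻¹
        • (s.map (fun a => (a : ℚ_[p]))) ^ k := funext hterm
    rw [← hfe]
    exact hQsum
  refine ⟨hQsum2.summable, E, hEunit, ?_, ?_⟩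
  · have h5 : FQ E = E.map (fun a => (a : ℚ_[p])) := rfl
    rw [← h5, hQsum2.tsum_eq]
  · intro U
    constructor
    · intro hU v hv
      exact powSpan_preserves s U hU hEA v hv
    · intro hU v hv
      have hsB : s ∈ powSpan E := s_mem_powSpan_E hr s ψ E hm hψA hEeq
      exact powSpan_preserves E U hU hsB v hv

end Main

end Stmt11Aux

/-- **Corollary (invariance of submodules under `s` and `exp s`).**
Let `p` be a prime, `1 ≤ r < p - 1` and `s ∈ gl(r, ℤ_[p])` residually nilpotent. Then
`exp s` converges with sum `E ∈ GL(r, ℤ_[p])`, and for every `ℤ_[p]`-submodule `U` of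
`ℤ_[p]^r` one has `s U ⊆ U` if and only if `(exp s) U ⊆ U`. -/
theorem stmt_11 (p : ℕ) [Fact p.Prime] (r : ℕ) (hr : 1 ≤ r) (hrp : r < p - 1)
    (s : Matrix (Fin r) (Fin r) ℤ_[p]) (hs : ResNilp s) :
    Summable (fun k : ℕ => ((k.factorial : ℚ_[p]))⁻¹ • (matQ s) ^ k) ∧
    ∃ E : Matrix (Fin r) (Fin r) ℤ_[p], IsUnit E ∧ matQ E = matExp (matQ s) ∧
      ∀ U : Submodule ℤ_[p] (Fin r → ℤ_[p]),
        ((∀ v ∈ U, s.mulVec v ∈ U) ↔ (∀ v ∈ U, E.mulVec v ∈ U)) := by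
  obtain ⟨m, hm1, hm⟩ := hs
  exact Stmt11Aux.main_test hr hrp s hm
end

section
/- Let p be an odd prime, N ≥ 1 an integer, and n ≥ 1 an integer. Let x, y ∈ GL(N,ℤ_p) satisfy x ≡ 1 (mod p^⌈n/2⌉) and y ≡ 1 (mod p^⌈n/2⌉). Then the series log x, log y and log(xy) converge p-adically with sums in gl(N,ℤ_p), and log(xy) ≡ log x + log y (mod p^n). -/
namespace Stmt13Aux

open IsUltrametricDist

variable {p : ℕ} [hp : Fact p.Prime] {N : ℕ}

/-- Entrywise bound for products of matrices over an ultrametric field. -/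
lemma entry_mul {A B : Matrix (Fin N) (Fin N) ℚ_[p]} {a b : ℝ} (ha : 0 ≤ a) (hb : 0 ≤ b)
    (hA : ∀ i j, ‖A i j‖ ≤ a) (hB : ∀ i j, ‖B i j‖ ≤ b) :
    ∀ i j, ‖(A * B) i j‖ ≤ a * b := by
  intro i j
  rw [Matrix.mul_apply]
  refine norm_sum_le_of_forall_le_of_nonneg (mul_nonneg ha hb) ?_
  intro k _
  exact le_trans (norm_mul_le _ _) (mul_le_mul (hA i k) (hB k j) (norm_nonneg _) ha)

lemma entry_pow {A : Matrix (Fin N) (Fin N) ℚ_[p]} {a : ℝ} (ha : 0 ≤ a)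
    (hA : ∀ i j, ‖A i j‖ ≤ a) : ∀ k : ℕ, 1 ≤ k → ∀ i j, ‖(A ^ k) i j‖ ≤ a ^ k := by
  intro k hk
  induction k, hk using Nat.le_induction with
  | base => simpa using hA
  | succ k hk ih =>
    rw [pow_succ, pow_succ]
    exact entry_mul (pow_nonneg ha k) ha ih hA

lemma three_pow_ge (v : ℕ) (hv : 1 ≤ v) : v + 2 ≤ 3 ^ v := by
  induction v, hv using Nat.le_induction with
  | base => norm_num
  | succ v hv ih =>
    calc v + 1 + 2 ≤ 3 * (v + 2) := by omega
    _ ≤ 3 * 3 ^ v := Nat.mul_le_mul_left _ ih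
    _ = 3 ^ (v + 1) := (pow_succ' 3 v).symm

lemma val_lt {k : ℕ} (hk : 1 ≤ k) : padicValNat p k < k := by
  have h1 : p ^ padicValNat p k ≤ k := Nat.le_of_dvd hk pow_padicValNat_dvd
  have h2 : padicValNat p k < 2 ^ padicValNat p k := Nat.lt_two_pow_self
  have h3 : 2 ^ padicValNat p k ≤ p ^ padicValNat p k :=
    Nat.pow_le_pow_left hp.out.two_le _
  omega

omit hp in
lemma val_add_two_le (hp3 : 3 ≤ p) {k : ℕ} (hk : 2 ≤ k) : padicValNat p k + 2 ≤ k := by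
  rcases Nat.eq_zero_or_pos (padicValNat p k) with h | h
  · omega
  · have h1 : p ^ padicValNat p k ≤ k := Nat.le_of_dvd (by omega) pow_padicValNat_dvd
    have h2 : 3 ^ padicValNat p k ≤ p ^ padicValNat p k := Nat.pow_le_pow_left hp3 _
    have h3 := three_pow_ge (padicValNat p k) h
    omega

lemma norm_natCast_inv (k : ℕ) (hk : k ≠ 0) :
    ‖((k : ℚ_[p]))⁻¹‖ = (p : ℝ) ^ (padicValNat p k : ℤ) := by
  rw [norm_inv, Padic.norm_eq_zpow_neg_valuation (by exact_mod_cast hk), Padic.valuation_natCast,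
    ← zpow_neg, neg_neg]

lemma norm_coe_of_dvd {m : ℕ} {z : ℤ_[p]} (h : (p : ℤ_[p]) ^ m ∣ z) :
    ‖(z : ℚ_[p])‖ ≤ (p : ℝ) ^ (-(m : ℤ)) := by
  obtain ⟨c, rfl⟩ := h
  rw [← PadicInt.norm_def, norm_mul, PadicInt.norm_p_pow]
  calc (p : ℝ) ^ (-m : ℤ) * ‖c‖ ≤ (p : ℝ) ^ (-m : ℤ) * 1 := by
        gcongr
        exact c.norm_le_one
  _ = (p : ℝ) ^ (-(m : ℤ)) := mul_one _

lemma matQ_entry_norm_le_one (z : Matrix (Fin N) (Fin N) ℤ_[p]) :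
    ∀ i j, ‖matQ z i j‖ ≤ 1 := by
  intro i j
  rw [matQ, Matrix.map_apply, ← PadicInt.norm_def]
  exact (z i j).norm_le_one

lemma one_sub_matQ_apply (z : Matrix (Fin N) (Fin N) ℤ_[p]) (i j : Fin N) :
    (1 - matQ z) i j = (((1 - z) i j : ℤ_[p]) : ℚ_[p]) := by
  simp [matQ, Matrix.sub_apply, Matrix.one_apply, apply_ite (fun a : ℤ_[p] => (a : ℚ_[p]))]

lemma matQ_mul (x y : Matrix (Fin N) (Fin N) ℤ_[p]) : matQ (x * y) = matQ x * matQ y := by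
  exact Matrix.map_mul (f := PadicInt.Coe.ringHom)

/-- The key noncommutative algebraic identity used in the induction. -/
lemma alg_identity {R : Type*} [Ring R] (U V A B C : R) :
    (U + V - U * V) * C - U * A - V * B
      = (U + V - U * V) * (C - A - B) + ((1 - U) * V) * A + (U * (1 - V)) * B := by
  noncomm_ring

end Stmt13Aux

open Stmt13Aux IsUltrametricDist in
/-- **Lemma (approximate additivity of log).**
Let `p` be an odd prime, `N ≥ 1` and `n ≥ 1`. If `x, y ∈ GL(N, ℤ_[p])` satisfy
`x ≡ 1 (mod p^⌈n/2⌉)` and `y ≡ 1 (mod p^⌈n/2⌉)`, then the series `log x`, `log y` and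
`log (x y)` converge with sums in `gl(N, ℤ_[p])`, and
`log (x y) ≡ log x + log y (mod pⁿ)`. -/
theorem stmt_13 (p : ℕ) [Fact p.Prime] (hp : p ≠ 2) (N : ℕ) (hN : 1 ≤ N) (n : ℕ) (hn : 1 ≤ n)
    (x y : Matrix (Fin N) (Fin N) ℤ_[p]) (hx : IsUnit x) (hy : IsUnit y)
    (hx1 : ∀ i j, (p : ℤ_[p]) ^ ((n + 1) / 2) ∣ (x - 1) i j)
    (hy1 : ∀ i j, (p : ℤ_[p]) ^ ((n + 1) / 2) ∣ (y - 1) i j) :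
    Summable (fun k : ℕ => ((k : ℚ_[p]))⁻¹ • (1 - matQ x) ^ k) ∧
    Summable (fun k : ℕ => ((k : ℚ_[p]))⁻¹ • (1 - matQ y) ^ k) ∧
    Summable (fun k : ℕ => ((k : ℚ_[p]))⁻¹ • (1 - matQ (x * y)) ^ k) ∧
    (∀ i j, ‖matLog (matQ x) i j‖ ≤ 1) ∧
    (∀ i j, ‖matLog (matQ y) i j‖ ≤ 1) ∧
    (∀ i j, ‖matLog (matQ (x * y)) i j‖ ≤ 1) ∧
    (∀ i j, ‖matLog (matQ (x * y)) i j - (matLog (matQ x) i j + matLog (matQ y) i j)‖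
      ≤ (p : ℝ) ^ (-(n : ℤ))) := by
  clear hx hy
  set m : ℕ := (n + 1) / 2 with hm_def
  have hm1 : 1 ≤ m := by omega
  have hn2m : n ≤ 2 * m := by omega
  have hp3 : 3 ≤ p := by
    have := (Fact.out : p.Prime).two_le
    rcases Nat.lt_or_ge p 3 with h | h
    · interval_cases p <;> simp_all
    · exact h
  have hpR : (1 : ℝ) < (p : ℝ) := by exact_mod_cast (by omega : 1 < p)
  have hpne : (p : ℝ) ≠ 0 := by positivity
  set U : Matrix (Fin N) (Fin N) ℚ_[p] := 1 - matQ x with hU_def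
  set V : Matrix (Fin N) (Fin N) ℚ_[p] := 1 - matQ y with hV_def
  set W : Matrix (Fin N) (Fin N) ℚ_[p] := 1 - matQ (x * y) with hW_def
  -- entry bounds
  have hUe : ∀ i j, ‖U i j‖ ≤ (p : ℝ) ^ (-(m : ℤ)) := by
    intro i j
    rw [hU_def, one_sub_matQ_apply]
    refine norm_coe_of_dvd ?_
    have h := dvd_neg.mpr (hx1 i j)
    simpa [Matrix.sub_apply, neg_sub] using h
  have hVe : ∀ i j, ‖V i j‖ ≤ (p : ℝ) ^ (-(m : ℤ)) := by
    intro i j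
    rw [hV_def, one_sub_matQ_apply]
    refine norm_coe_of_dvd ?_
    have h := dvd_neg.mpr (hy1 i j)
    simpa [Matrix.sub_apply, neg_sub] using h
  have hWe : ∀ i j, ‖W i j‖ ≤ (p : ℝ) ^ (-(m : ℤ)) := by
    intro i j
    rw [hW_def, one_sub_matQ_apply]
    refine norm_coe_of_dvd ?_
    have hEq : (1 : Matrix (Fin N) (Fin N) ℤ_[p]) - x * y = -((x - 1) * y + (y - 1)) := by
      noncomm_ring
    rw [hEq]
    refine dvd_neg.mpr ?_
    rw [Matrix.add_apply, Matrix.mul_apply]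
    exact dvd_add (Finset.dvd_sum fun k _ => ((hx1 i k).mul_right _)) (hy1 i j)
  have hWUV : W = U + V - U * V := by
    rw [hW_def, hU_def, hV_def, matQ_mul]
    noncomm_ring
  have hpm_nonneg : (0 : ℝ) ≤ (p : ℝ) ^ (-(m : ℤ)) := by positivity
  -- exponent bookkeeping
  have hpow_e : ∀ k : ℕ, ((p : ℝ) ^ (-(m : ℤ))) ^ k = (p : ℝ) ^ (-((m : ℤ) * k)) := by
    intro k
    rw [← zpow_natCast ((p : ℝ) ^ (-(m : ℤ))) k, ← zpow_mul]
    congr 1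
    push_cast
    ring
  -- bound on a single series term
  have key : ∀ (A : Matrix (Fin N) (Fin N) ℚ_[p]), (∀ i j, ‖A i j‖ ≤ (p : ℝ) ^ (-(m : ℤ))) →
      ∀ k : ℕ, 1 ≤ k → ∀ i j,
      ‖(((k : ℚ_[p]))⁻¹ • A ^ k) i j‖
        ≤ (p : ℝ) ^ ((padicValNat p k : ℤ) - (m : ℤ) * k) := by
    intro A hA k hk i j
    rw [Matrix.smul_apply, smul_eq_mul, norm_mul]
    calc ‖((k : ℚ_[p]))⁻¹‖ * ‖(A ^ k) i j‖
        = (p : ℝ) ^ (padicValNat p k : ℤ) * ‖(A ^ k) i j‖ := by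
          rw [norm_natCast_inv k (by omega)]
    _ ≤ (p : ℝ) ^ (padicValNat p k : ℤ) * ((p : ℝ) ^ (-(m : ℤ))) ^ k :=
          mul_le_mul_of_nonneg_left (entry_pow hpm_nonneg hA k hk i j) (by positivity)
    _ = (p : ℝ) ^ ((padicValNat p k : ℤ) - (m : ℤ) * k) := by
          rw [hpow_e, ← zpow_add₀ hpne, sub_eq_add_neg]
  -- summability
  have hmaj : Summable (fun k : ℕ => (k : ℝ) * ((p : ℝ)⁻¹) ^ k) := by
    have h := summable_pow_mul_geometric_of_norm_lt_one (R := ℝ) 1 (r := (p : ℝ)⁻¹) (by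
      rw [norm_inv, Real.norm_natCast]
      refine inv_lt_one_of_one_lt₀ hpR)
    simpa [pow_one] using h
  have hsummand : ∀ (A : Matrix (Fin N) (Fin N) ℚ_[p]),
      (∀ i j, ‖A i j‖ ≤ (p : ℝ) ^ (-(m : ℤ))) → ∀ i j, ∀ k : ℕ,
      ‖(((k : ℚ_[p]))⁻¹ • A ^ k) i j‖ ≤ (k : ℝ) * ((p : ℝ)⁻¹) ^ k := by
    intro A hA i j k
    rcases Nat.eq_zero_or_pos k with rfl | hk
    · simp
    refine (key A hA k hk i j).trans ?_
    rw [sub_eq_add_neg, zpow_add₀ hpne]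
    have h1 : (p : ℝ) ^ (padicValNat p k : ℤ) ≤ (k : ℝ) := by
      have hd : (p ^ padicValNat p k : ℕ) ≤ k := Nat.le_of_dvd hk pow_padicValNat_dvd
      calc (p : ℝ) ^ (padicValNat p k : ℤ) = ((p ^ padicValNat p k : ℕ) : ℝ) := by
            rw [zpow_natCast]; push_cast; ring
      _ ≤ (k : ℝ) := Nat.cast_le.mpr hd
    have h2 : (p : ℝ) ^ (-((m : ℤ) * k)) ≤ ((p : ℝ)⁻¹) ^ k := by
      have : ((p : ℝ)⁻¹) ^ k = (p : ℝ) ^ (-(k : ℤ)) := by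
        rw [zpow_neg, zpow_natCast, inv_pow]
      rw [this]
      apply zpow_le_zpow_right₀ hpR.le
      have : (k : ℤ) ≤ (m : ℤ) * k := by
        have : k ≤ m * k := Nat.le_mul_of_pos_left k (by omega)
        exact_mod_cast this
      omega
    exact mul_le_mul h1 h2 (by positivity) (by positivity)
  have hsumEnt : ∀ (A : Matrix (Fin N) (Fin N) ℚ_[p]),
      (∀ i j, ‖A i j‖ ≤ (p : ℝ) ^ (-(m : ℤ))) → ∀ i j,
      Summable (fun k : ℕ => (((k : ℚ_[p]))⁻¹ • A ^ k) i j) :=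
    fun A hA i j => Summable.of_norm_bounded hmaj (hsummand A hA i j)
  have hsumM : ∀ (A : Matrix (Fin N) (Fin N) ℚ_[p]),
      (∀ i j, ‖A i j‖ ≤ (p : ℝ) ^ (-(m : ℤ))) →
      Summable (fun k : ℕ => ((k : ℚ_[p]))⁻¹ • A ^ k) := by
    intro A hA
    exact Pi.summable.mpr fun i => Pi.summable.mpr fun j => hsumEnt A hA i j
  have hsU := hsumM U hUe
  have hsV := hsumM V hVe
  have hsW := hsumM W hWe
  -- entrywise description of matLog
  have hlog : ∀ (z : Matrix (Fin N) (Fin N) ℚ_[p]),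
      Summable (fun k : ℕ => ((k : ℚ_[p]))⁻¹ • (1 - z) ^ k) → ∀ i j,
      matLog z i j = -∑' k : ℕ, (((k : ℚ_[p]))⁻¹ • (1 - z) ^ k) i j := by
    intro z hs i j
    rw [matLog, Matrix.neg_apply, neg_inj]
    have e1 := tsum_apply (f := fun k : ℕ => ((((k : ℚ_[p]))⁻¹ • (1 - z) ^ k :
      Matrix (Fin N) (Fin N) ℚ_[p]) : Fin N → Fin N → ℚ_[p])) (x := i) hs
    have e2 := tsum_apply (Pi.summable.mp hs i) (x := j)
    exact (congrFun e1 j).trans e2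
  have hlog_le_one : ∀ (A : Matrix (Fin N) (Fin N) ℚ_[p]),
      (∀ i j, ‖A i j‖ ≤ (p : ℝ) ^ (-(m : ℤ))) → ∀ i j,
      ‖∑' k : ℕ, (((k : ℚ_[p]))⁻¹ • A ^ k) i j‖ ≤ 1 := by
    intro A hA i j
    refine norm_tsum_le_of_forall_le_of_nonneg zero_le_one ?_
    intro k
    rcases Nat.eq_zero_or_pos k with rfl | hk
    · simp
    refine (key A hA k hk i j).trans ?_
    have hvk : padicValNat p k < m * k :=
      lt_of_lt_of_le (val_lt hk) (Nat.le_mul_of_pos_left k (by omega))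
    calc (p : ℝ) ^ ((padicValNat p k : ℤ) - (m : ℤ) * k) ≤ (p : ℝ) ^ (0 : ℤ) := by
          apply zpow_le_zpow_right₀ hpR.le
          have : (padicValNat p k : ℤ) ≤ (m : ℤ) * k := by exact_mod_cast hvk.le
          omega
    _ = 1 := zpow_zero _
  -- the D_k bound by induction
  have hD : ∀ k : ℕ, 1 ≤ k → ∀ i j,
      ‖(W ^ k - U ^ k - V ^ k) i j‖ ≤ (p : ℝ) ^ (-((m : ℤ) * k)) := by
    intro k hk
    induction k, hk using Nat.le_induction with
    | base =>
      intro i j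
      have h1 : W ^ 1 - U ^ 1 - V ^ 1 = -(U * V) := by
        rw [pow_one, pow_one, pow_one, hWUV]; abel
      rw [h1, Matrix.neg_apply, norm_neg]
      refine (entry_mul hpm_nonneg hpm_nonneg hUe hVe i j).trans ?_
      rw [← zpow_add₀ hpne]
      apply zpow_le_zpow_right₀ hpR.le
      rw [Nat.cast_one, mul_one]
      omega
    | succ k hk ih =>
      intro i j
      have hExp : W ^ (k + 1) - U ^ (k + 1) - V ^ (k + 1)
          = W * (W ^ k - U ^ k - V ^ k) + ((1 - U) * V) * U ^ k + (U * (1 - V)) * V ^ k := by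
        rw [pow_succ' W, pow_succ' U, pow_succ' V, hWUV]
        exact alg_identity U V (U ^ k) (V ^ k) ((U + V - U * V) ^ k)
      rw [hExp, Matrix.add_apply, Matrix.add_apply]
      have hb1 : ‖(W * (W ^ k - U ^ k - V ^ k)) i j‖
          ≤ (p : ℝ) ^ (-(m : ℤ)) * (p : ℝ) ^ (-((m : ℤ) * k)) :=
        entry_mul hpm_nonneg (by positivity) hWe ih i j
      have h1U : (1 : Matrix (Fin N) (Fin N) ℚ_[p]) - U = matQ x := by
        rw [hU_def]; abel
      have h1V : (1 : Matrix (Fin N) (Fin N) ℚ_[p]) - V = matQ y := by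
        rw [hV_def]; abel
      have hb2 : ‖(((1 - U) * V) * U ^ k) i j‖
          ≤ (1 * (p : ℝ) ^ (-(m : ℤ))) * ((p : ℝ) ^ (-(m : ℤ))) ^ k := by
        refine entry_mul (by positivity) (by positivity) ?_ (entry_pow hpm_nonneg hUe k hk) i j
        rw [h1U]
        exact entry_mul zero_le_one hpm_nonneg (matQ_entry_norm_le_one x) hVe
      have hb3 : ‖((U * (1 - V)) * V ^ k) i j‖
          ≤ ((p : ℝ) ^ (-(m : ℤ)) * 1) * ((p : ℝ) ^ (-(m : ℤ))) ^ k := by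
        refine entry_mul (by positivity) (by positivity) ?_ (entry_pow hpm_nonneg hVe k hk) i j
        rw [h1V]
        exact entry_mul hpm_nonneg zero_le_one hUe (matQ_entry_norm_le_one y)
      have hcast : (-((m : ℤ) * ((k + 1 : ℕ) : ℤ))) = (-((m : ℤ) * ((k : ℤ) + 1))) := by
        push_cast
        ring
      rw [hcast]
      have e2 : (1 * (p : ℝ) ^ (-(m : ℤ))) * ((p : ℝ) ^ (-(m : ℤ))) ^ k
          = (p : ℝ) ^ (-((m : ℤ) * ((k : ℤ) + 1))) := by
        rw [one_mul, hpow_e, ← zpow_add₀ hpne]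
        congr 1
        ring
      have e3 : ((p : ℝ) ^ (-(m : ℤ)) * 1) * ((p : ℝ) ^ (-(m : ℤ))) ^ k
          = (p : ℝ) ^ (-((m : ℤ) * ((k : ℤ) + 1))) := by
        rw [mul_one, hpow_e, ← zpow_add₀ hpne]
        congr 1
        ring
      refine le_trans (norm_add_le_max _ _) (max_le (le_trans (norm_add_le_max _ _)
        (max_le ?_ ?_)) ?_)
      · refine hb1.trans (le_of_eq ?_)
        rw [← zpow_add₀ hpne]
        congr 1
        ring
      · exact hb2.trans_eq e2
      · exact hb3.trans_eq e3
  -- assemble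
  refine ⟨hsU, hsV, hsW, ?_, ?_, ?_, ?_⟩
  · intro i j
    rw [hlog (matQ x) (by rw [← hU_def]; exact hsU), ← hU_def, norm_neg]
    exact hlog_le_one U hUe i j
  · intro i j
    rw [hlog (matQ y) (by rw [← hV_def]; exact hsV), ← hV_def, norm_neg]
    exact hlog_le_one V hVe i j
  · intro i j
    rw [hlog (matQ (x * y)) (by rw [← hW_def]; exact hsW), ← hW_def, norm_neg]
    exact hlog_le_one W hWe i j
  · intro i j
    have hsUe := hsumEnt U hUe i j
    have hsVe := hsumEnt V hVe i j
    have hsWe := hsumEnt W hWe i j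
    rw [hlog (matQ (x * y)) (by rw [← hW_def]; exact hsW), ← hW_def,
      hlog (matQ x) (by rw [← hU_def]; exact hsU), ← hU_def,
      hlog (matQ y) (by rw [← hV_def]; exact hsV), ← hV_def]
    have hrw : -∑' k : ℕ, (((k : ℚ_[p]))⁻¹ • W ^ k) i j -
        (-∑' k : ℕ, (((k : ℚ_[p]))⁻¹ • U ^ k) i j +
          -∑' k : ℕ, (((k : ℚ_[p]))⁻¹ • V ^ k) i j)
        = ∑' k : ℕ, ((((k : ℚ_[p]))⁻¹ • U ^ k) i j + (((k : ℚ_[p]))⁻¹ • V ^ k) i j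
            - (((k : ℚ_[p]))⁻¹ • W ^ k) i j) := by
      rw [Summable.tsum_sub (hsUe.add hsVe) hsWe, Summable.tsum_add hsUe hsVe]
      ring
    rw [hrw]
    refine norm_tsum_le_of_forall_le_of_nonneg (by positivity) ?_
    intro k
    have hterm : ∀ k : ℕ, (((k : ℚ_[p]))⁻¹ • U ^ k) i j + (((k : ℚ_[p]))⁻¹ • V ^ k) i j
        - (((k : ℚ_[p]))⁻¹ • W ^ k) i j
        = ((k : ℚ_[p]))⁻¹ * (-((W ^ k - U ^ k - V ^ k) i j)) := by
      intro k
      simp only [Matrix.smul_apply, smul_eq_mul, Matrix.sub_apply]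
      ring
    rw [hterm k, norm_mul, norm_neg]
    rcases Nat.eq_zero_or_pos k with rfl | hk1
    · simp
    rcases Nat.lt_or_ge k 2 with hk2 | hk2
    · -- k = 1
      have hk : k = 1 := by omega
      subst hk
      have h1 : W ^ 1 - U ^ 1 - V ^ 1 = -(U * V) := by
        rw [pow_one, pow_one, pow_one, hWUV]; abel
      rw [h1, Matrix.neg_apply, norm_neg]
      calc ‖((1 : ℕ) : ℚ_[p])⁻¹‖ * ‖(U * V) i j‖
          ≤ 1 * ((p : ℝ) ^ (-(m : ℤ)) * (p : ℝ) ^ (-(m : ℤ))) := by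
            gcongr
            · simp
            · exact entry_mul hpm_nonneg hpm_nonneg hUe hVe i j
      _ ≤ (p : ℝ) ^ (-(n : ℤ)) := by
            rw [one_mul, ← zpow_add₀ hpne]
            apply zpow_le_zpow_right₀ hpR.le
            omega
    · -- k ≥ 2
      have hval : padicValNat p k + 2 ≤ k := val_add_two_le hp3 hk2
      calc ‖((k : ℕ) : ℚ_[p])⁻¹‖ * ‖(W ^ k - U ^ k - V ^ k) i j‖
          ≤ (p : ℝ) ^ (padicValNat p k : ℤ) * (p : ℝ) ^ (-((m : ℤ) * k)) := by
            rw [norm_natCast_inv k (by omega)]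
            gcongr
            · exact hD k (by omega) i j
      _ ≤ (p : ℝ) ^ (-(n : ℤ)) := by
            rw [← zpow_add₀ hpne]
            apply zpow_le_zpow_right₀ hpR.le
            have hv : (padicValNat p k : ℤ) + 2 ≤ (k : ℤ) := by exact_mod_cast hval
            have hnn : (n : ℤ) ≤ 2 * (m : ℤ) := by exact_mod_cast hn2m
            have hmm : (1 : ℤ) ≤ (m : ℤ) := by exact_mod_cast hm1
            have hkk : (2 : ℤ) ≤ (k : ℤ) := by exact_mod_cast hk2
            nlinarith [mul_nonneg (sub_nonneg.mpr hmm) (sub_nonneg.mpr hkk)]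
end

section
/- Let p be a prime, s ≥ 1 and d ≥ 1 integers, and let f ∈ ℤ_p[X₁, …, X_s] be a polynomial of total degree ≤ d which is not congruent to the zero polynomial modulo p (i.e., at least one coefficient of f is a p-adic unit). Then for every integer n ≥ 0, the number of tuples x ∈ (ℤ/p^nℤ)^s satisfying f̄(x) = 0, where f̄ ∈ (ℤ/p^nℤ)[X₁, …, X_s] is the reduction of f modulo p^n, is at most d^s · binom(n+s−1, s−1) · p^(ns − n/d), where the last factor is the real number p raised to the real exponent ns − n/d. -/
open Finset Polynomial

namespace S14

/-- ceiling division -/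
def cdiv (n d : ℕ) : ℕ := (n + d - 1) / d

lemma cdiv_le_iff {d : ℕ} (hd : 1 ≤ d) (n k : ℕ) : cdiv n d ≤ k ↔ n ≤ d * k := by
  unfold cdiv
  rw [Nat.div_le_iff_le_mul_add_pred hd]
  omega

lemma le_mul_cdiv {d : ℕ} (hd : 1 ≤ d) (n : ℕ) : n ≤ d * cdiv n d :=
  (cdiv_le_iff hd n _).1 le_rfl

lemma cdiv_le_self {d : ℕ} (hd : 1 ≤ d) (n : ℕ) : cdiv n d ≤ n :=
  (cdiv_le_iff hd n n).2 (Nat.le_mul_of_pos_left n hd)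

lemma cdiv_zero {d : ℕ} (hd : 1 ≤ d) : cdiv 0 d = 0 :=
  Nat.le_zero.1 (cdiv_le_self hd 0)

lemma one_le_cdiv {d n : ℕ} (hd : 1 ≤ d) (hn : 1 ≤ n) : 1 ≤ cdiv n d := by
  by_contra h
  have := (cdiv_le_iff hd n 0).1 (by omega)
  omega

lemma cdiv_superadd {d : ℕ} (hd : 1 ≤ d) {j n : ℕ} (hj : j ≤ n) :
    cdiv n d ≤ cdiv j d + cdiv (n - j) d := by
  rw [cdiv_le_iff hd, Nat.mul_add]
  have h1 := le_mul_cdiv hd j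
  have h2 := le_mul_cdiv hd (n - j)
  omega

lemma mul_cdiv_le {d : ℕ} (hd : 1 ≤ d) (n : ℕ) : d * cdiv n d ≤ n + d - 1 := by
  unfold cdiv
  rw [mul_comm]
  exact Nat.div_mul_le_self _ _

/-- hockey stick -/
lemma hockey (q : ℕ) : ∀ n : ℕ, ∑ j ∈ range (n + 1), (j + q).choose q = (n + q + 1).choose (q + 1)
  | 0 => by simp
  | (n+1) => by
    rw [Finset.sum_range_succ, hockey q n]
    have : n + 1 + q + 1 = (n + q + 1) + 1 := by ring
    rw [this, Nat.choose_succ_succ (n + q + 1) q]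
    have : n + 1 + q = n + q + 1 := by ring
    rw [this]
    ring

/-- counting through a map with small fibers -/
lemma count_le_mul_of_fiber_le {α β : Type*} [Fintype α] [Fintype β] [DecidableEq β]
    (f : α → β) (P : β → Prop) [DecidablePred P] (K : ℕ)
    (hK : ∀ b, (univ.filter fun a => f a = b).card ≤ K) :
    (univ.filter fun a => P (f a)).card ≤ K * (univ.filter P).card := by
  classical
  rw [Finset.card_eq_sum_card_fiberwise (t := univ.filter P)
    (fun x hx => by simpa using (Finset.mem_filter.1 hx).2)]
  calc ∑ b ∈ univ.filter P, ((univ.filter fun a => P (f a)).filter fun a => f a = b).card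
      ≤ ∑ b ∈ univ.filter P, K := by
        refine Finset.sum_le_sum fun b _ => ?_
        exact le_trans (Finset.card_le_card (by
          intro a ha
          simp only [Finset.mem_filter] at ha ⊢
          exact ⟨Finset.mem_univ a, ha.2⟩)) (hK b)
    _ = K * (univ.filter P).card := by rw [Finset.sum_const, smul_eq_mul, mul_comm]

lemma fiber_card_eq {A B : Type*} [AddCommGroup A] [AddCommGroup B] [Fintype A] [Fintype B]
    [DecidableEq B] (φ : A →+ B) (hs : Function.Surjective φ) (b : B) :
    (univ.filter fun a => φ a = b).card * Fintype.card B = Fintype.card A := by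
  classical
  have key : ∀ b : B, (univ.filter fun a => φ a = b).card
      = (univ.filter fun a => φ a = 0).card := by
    intro b
    obtain ⟨a₀, ha₀⟩ := hs b
    apply Finset.card_bij (fun a _ => a - a₀)
    · intro a ha
      simp only [Finset.mem_filter, Finset.mem_univ, true_and] at ha ⊢
      rw [map_sub, ha, ha₀, sub_self]
    · intro a ha a' ha' h
      exact sub_left_injective h
    · intro c hc
      simp only [Finset.mem_filter, Finset.mem_univ, true_and] at hc ⊢
      exact ⟨c + a₀, by rw [map_add, hc, ha₀, zero_add], by simp⟩
  have total : ∑ b : B, (univ.filter fun a => φ a = b).card = Fintype.card A := by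
    rw [← Finset.card_eq_sum_card_fiberwise (fun x _ => Finset.mem_univ (φ x))]
    simp [Finset.card_univ]
  rw [key]
  calc (univ.filter fun a => φ a = 0).card * Fintype.card B
      = ∑ _b : B, (univ.filter fun a => φ a = 0).card := by
        rw [Finset.sum_const, smul_eq_mul, Finset.card_univ, mul_comm]
    _ = ∑ b : B, (univ.filter fun a => φ a = b).card := by
        exact Finset.sum_congr rfl fun b _ => (key b).symm
    _ = Fintype.card A := total

lemma count_comp_le {A B : Type*} [AddCommGroup A] [AddCommGroup B] [Fintype A] [Fintype B]
    [DecidableEq B] (φ : A →+ B) (hs : Function.Surjective φ) (K : ℕ)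
    (hcard : Fintype.card A = K * Fintype.card B) (P : B → Prop) [DecidablePred P] :
    (univ.filter fun a => P (φ a)).card ≤ K * (univ.filter P).card := by
  apply count_le_mul_of_fiber_le
  intro b
  have h1 := fiber_card_eq φ hs b
  have h2 : 0 < Fintype.card B := Fintype.card_pos
  exact le_of_eq (Nat.eq_of_mul_eq_mul_right h2 (by rw [h1, hcard]))



variable {p : ℕ} [hp : Fact p.Prime]

instance (n : ℕ) : NeZero (p ^ n) := ⟨pow_ne_zero n hp.out.ne_zero⟩

lemma dvd_iff_toZModPow {n : ℕ} {z : ℤ_[p]} :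
    (p : ℤ_[p]) ^ n ∣ z ↔ PadicInt.toZModPow n z = 0 := by
  rw [← RingHom.mem_ker, PadicInt.ker_toZModPow, Ideal.mem_span_singleton]

lemma toZModPow_lift {n : ℕ} (x : ZMod (p ^ n)) :
    PadicInt.toZModPow n ((x.val : ℤ_[p])) = x := by
  rw [map_natCast]
  exact ZMod.natCast_rightInverse x

lemma norm_le_of_dvd {n : ℕ} {z : ℤ_[p]} (h : (p : ℤ_[p]) ^ n ∣ z) :
    ‖(z : ℚ_[p])‖ ≤ (p : ℝ) ^ (-(n : ℤ)) := by
  rw [← PadicInt.norm_def, PadicInt.norm_le_pow_iff_mem_span_pow]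
  exact Ideal.mem_span_singleton.2 h

lemma norm_ge_of_not_dvd {t : ℕ} {z : ℤ_[p]} (h : ¬ (p : ℤ_[p]) ^ t ∣ z) :
    (p : ℝ) ^ (-(t : ℤ) + 1) ≤ ‖(z : ℚ_[p])‖ := by
  rw [← PadicInt.norm_def]
  by_contra hlt
  push_neg at hlt
  apply h
  have : ‖z‖ ≤ (p : ℝ) ^ (-(t : ℤ)) := by
    rw [PadicInt.norm_le_pow_iff_norm_lt_pow_add_one]
    exact hlt
  rw [PadicInt.norm_le_pow_iff_mem_span_pow, Ideal.mem_span_singleton] at this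
  exact this

lemma dvd_eval_congr {k : ℕ} (g : Polynomial ℤ_[p]) {z z' : ℤ_[p]}
    (h : PadicInt.toZModPow k z = PadicInt.toZModPow k z') :
    ((p : ℤ_[p]) ^ k ∣ g.eval z ↔ (p : ℤ_[p]) ^ k ∣ g.eval z') := by
  have hd : (p : ℤ_[p]) ^ k ∣ z - z' :=
    dvd_iff_toZModPow.2 (by rw [map_sub, h, sub_self])
  have h2 : (z - z') ∣ g.eval z - g.eval z' := Polynomial.sub_dvd_eval_sub z z' g
  have h3 := hd.trans h2
  constructor <;> intro hh
  · simpa using hh.sub h3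
  · simpa using hh.add h3

lemma mbridge {r : ℕ} (k : ℕ) (G : MvPolynomial (Fin r) ℤ_[p]) (z : Fin r → ℤ_[p]) :
    PadicInt.toZModPow k (MvPolynomial.eval z G)
      = MvPolynomial.eval (fun i => PadicInt.toZModPow k (z i))
          (MvPolynomial.map (PadicInt.toZModPow k) G) := by
  rw [← MvPolynomial.eval₂_id, MvPolynomial.eval₂_comp_left, MvPolynomial.eval_map,
    RingHom.comp_id]
  rfl

lemma dvd_meval_congr {r : ℕ} {k : ℕ} (G : MvPolynomial (Fin r) ℤ_[p]) {z z' : Fin r → ℤ_[p]}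
    (h : ∀ i, PadicInt.toZModPow k (z i) = PadicInt.toZModPow k (z' i)) :
    ((p : ℤ_[p]) ^ k ∣ MvPolynomial.eval z G ↔ (p : ℤ_[p]) ^ k ∣ MvPolynomial.eval z' G) := by
  rw [dvd_iff_toZModPow, dvd_iff_toZModPow, mbridge, mbridge]
  simp only [funext h]

lemma cast_surj {t n : ℕ} (h : t ≤ n) :
    Function.Surjective (ZMod.castHom (pow_dvd_pow p h) (ZMod (p ^ t))) := by
  intro b
  refine ⟨((b.val : ℕ) : ZMod (p ^ n)), ?_⟩
  rw [map_natCast]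
  exact ZMod.natCast_rightInverse b

lemma cast_lift {t n : ℕ} (h : t ≤ n) (x : ZMod (p ^ n)) :
    PadicInt.toZModPow t ((x.val : ℤ_[p]))
      = ZMod.castHom (pow_dvd_pow p h) (ZMod (p ^ t)) x := by
  rw [ZMod.castHom_apply]
  conv_rhs => rw [← toZModPow_lift (p := p) x]
  rw [PadicInt.cast_toZModPow _ _ h]

open scoped Classical in
noncomputable def sol (p : ℕ) [Fact p.Prime] (n : ℕ) (f : Polynomial ℤ_[p]) :
    Finset (ZMod (p ^ n)) :=
  univ.filter fun x => (p : ℤ_[p]) ^ n ∣ f.eval ((x.val : ℤ_[p]))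

open scoped Classical in
lemma key_image {d n : ℕ} (hd : 1 ≤ d) (hn : 1 ≤ n) (f : Polynomial ℤ_[p])
    (hdeg : f.natDegree ≤ d) (hprim : ∃ k, IsUnit (f.coeff k)) :
    ((sol p n f).image
      (ZMod.castHom (pow_dvd_pow p (cdiv_le_self hd n)) (ZMod (p ^ cdiv n d)))).card ≤ d := by
  set t := cdiv n d with htdef
  set r := ZMod.castHom (pow_dvd_pow p (cdiv_le_self hd n)) (ZMod (p ^ t)) with hrdef
  by_contra hgt
  push_neg at hgt
  obtain ⟨T, hTsub, hTcard⟩ := Finset.exists_subset_card_eq (Nat.succ_le_of_lt hgt)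
  have hmem : ∀ y ∈ T, ∃ x, x ∈ sol p n f ∧ r x = y := by
    intro y hy
    obtain ⟨x, hx1, hx2⟩ := Finset.mem_image.1 (hTsub hy)
    exact ⟨x, hx1, hx2⟩
  choose! xf hxf1 hxf2 using hmem
  set u : ZMod (p ^ t) → ℤ_[p] := fun y => (((xf y).val : ℕ) : ℤ_[p]) with hudef
  have hu1 : ∀ y ∈ T, PadicInt.toZModPow t (u y) = y := by
    intro y hy
    rw [hudef]
    simp only
    rw [cast_lift (cdiv_le_self hd n), hxf2 y hy]
  have hu2 : ∀ y ∈ T, (p : ℤ_[p]) ^ n ∣ f.eval (u y) := by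
    intro y hy
    have := hxf1 y hy
    rw [sol, Finset.mem_filter] at this
    exact this.2
  have hdiff : ∀ y ∈ T, ∀ y' ∈ T, y ≠ y' → ¬ (p : ℤ_[p]) ^ t ∣ (u y - u y') := by
    intro y hy y' hy' hne hdvd
    apply hne
    have h0 := dvd_iff_toZModPow.1 hdvd
    rw [map_sub, hu1 y hy, hu1 y' hy', sub_eq_zero] at h0
    exact h0
  set v : ZMod (p ^ t) → ℚ_[p] := fun y => ((u y : ℚ_[p])) with hvdef
  have hinj : Set.InjOn v T := by
    intro y hy y' hy' hvv
    by_contra hne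
    have huu : u y = u y' := Subtype.coe_injective hvv
    exact hdiff y hy y' hy' hne (by rw [huu, sub_self]; exact dvd_zero _)
  set F := f.map (PadicInt.Coe.ringHom) with hFdef
  have hdegF : F.degree < T.card := by
    rw [hTcard]
    calc F.degree ≤ f.degree := Polynomial.degree_map_le
      _ ≤ (f.natDegree : WithBot ℕ) := Polynomial.degree_le_natDegree
      _ < ((d + 1 : ℕ) : WithBot ℕ) := by exact_mod_cast Nat.lt_succ_of_le hdeg
  have hinterp := Lagrange.eq_interpolate hinj hdegF
  obtain ⟨k, hk⟩ := hprim
  have hev : ∀ y, F.eval (v y) = (((f.eval (u y) : ℤ_[p]) : ℚ_[p])) := by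
    intro y
    rw [hFdef, Polynomial.eval_map]
    exact Polynomial.eval₂_at_apply PadicInt.Coe.ringHom (u y)
  have hcoeff : F.coeff k = ∑ y ∈ T, ((f.eval (u y) : ℤ_[p]) : ℚ_[p]) * (Lagrange.basis T v y).coeff k := by
    conv_lhs => rw [hinterp]
    rw [Lagrange.interpolate_apply, Polynomial.finset_sum_coeff]
    refine Finset.sum_congr rfl fun y _ => ?_
    rw [Polynomial.coeff_C_mul, hev]
  have hp0 : (0 : ℝ) < p := by exact_mod_cast hp.out.pos
  have hp1 : (1 : ℝ) < p := by exact_mod_cast hp.out.one_lt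
  have hterm : ∀ y ∈ T, ‖((f.eval (u y) : ℤ_[p]) : ℚ_[p]) * (Lagrange.basis T v y).coeff k‖
      ≤ (p : ℝ) ^ (-(1 : ℤ)) := by
    intro y hy
    rw [norm_mul]
    have h1 : ‖((f.eval (u y) : ℤ_[p]) : ℚ_[p])‖ ≤ (p : ℝ) ^ (-(n : ℤ)) := norm_le_of_dvd (hu2 y hy)
    have hbasis : Lagrange.basis T v y
        = Polynomial.C (∏ j ∈ T.erase y, (v y - v j)⁻¹)
          * ∏ j ∈ T.erase y, ((Polynomial.X : Polynomial ℚ_[p]) - Polynomial.C (v j)) := by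
      rw [Lagrange.basis]
      simp_rw [Lagrange.basisDivisor]
      rw [Finset.prod_mul_distrib, map_prod]
    have hcarde : (T.erase y).card = d := by
      rw [Finset.card_erase_of_mem hy, hTcard]
      omega
    have h2 : ‖(Lagrange.basis T v y).coeff k‖ ≤ (p : ℝ) ^ (((t : ℤ) - 1) * d) := by
      rw [hbasis, Polynomial.coeff_C_mul, norm_mul]
      have hQ : ‖(∏ j ∈ T.erase y,
          ((Polynomial.X : Polynomial ℚ_[p]) - Polynomial.C (v j))).coeff k‖ ≤ 1 := by
        have hQeq : (∏ j ∈ T.erase y, ((Polynomial.X : Polynomial ℚ_[p]) - Polynomial.C (v j)))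
            = Polynomial.map PadicInt.Coe.ringHom
              (∏ j ∈ T.erase y, ((Polynomial.X : Polynomial ℤ_[p]) - Polynomial.C (u j))) := by
          rw [Polynomial.map_prod]
          refine Finset.prod_congr rfl fun j _ => ?_
          rw [Polynomial.map_sub, Polynomial.map_X, Polynomial.map_C]
          rfl
        rw [hQeq, Polynomial.coeff_map]
        calc ‖PadicInt.Coe.ringHom ((∏ j ∈ T.erase y,
            ((Polynomial.X : Polynomial ℤ_[p]) - Polynomial.C (u j))).coeff k)‖
            = ‖(∏ j ∈ T.erase y,
              ((Polynomial.X : Polynomial ℤ_[p]) - Polynomial.C (u j))).coeff k‖ := rfl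
          _ ≤ 1 := PadicInt.norm_le_one _
      have hc : ‖∏ j ∈ T.erase y, (v y - v j)⁻¹‖ ≤ (p : ℝ) ^ (((t : ℤ) - 1) * d) := by
        rw [norm_prod]
        calc ∏ j ∈ T.erase y, ‖(v y - v j)⁻¹‖
            ≤ ∏ _j ∈ T.erase y, (p : ℝ) ^ ((t : ℤ) - 1) := by
              refine Finset.prod_le_prod (fun j _ => norm_nonneg _) fun j hj => ?_
              obtain ⟨hjy, hjT⟩ := Finset.mem_erase.1 hj
              have hnd : ¬ (p : ℤ_[p]) ^ t ∣ (u y - u j) :=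
                hdiff y hy j hjT (Ne.symm hjy)
              have hlb := norm_ge_of_not_dvd hnd
              have hveq : v y - v j = ((u y - u j : ℤ_[p]) : ℚ_[p]) := by
                rw [hvdef]; push_cast; ring
              rw [norm_inv, hveq]
              have hpos : (0 : ℝ) < (p : ℝ) ^ (-(t : ℤ) + 1) := by positivity
              calc ‖((u y - u j : ℤ_[p]) : ℚ_[p])‖⁻¹
                  ≤ ((p : ℝ) ^ (-(t : ℤ) + 1))⁻¹ := by
                    exact inv_anti₀ hpos hlb
                _ = (p : ℝ) ^ ((t : ℤ) - 1) := by
                    rw [← zpow_neg]; congr 1; ring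
          _ = (p : ℝ) ^ (((t : ℤ) - 1) * d) := by
              rw [Finset.prod_const, hcarde, ← zpow_natCast ((p:ℝ) ^ ((t : ℤ) - 1)) d,
                ← zpow_mul]
      calc ‖∏ j ∈ T.erase y, (v y - v j)⁻¹‖ * ‖(∏ j ∈ T.erase y,
          ((Polynomial.X : Polynomial ℚ_[p]) - Polynomial.C (v j))).coeff k‖
          ≤ ((p : ℝ) ^ (((t : ℤ) - 1) * d)) * 1 :=
            mul_le_mul hc hQ (norm_nonneg _) (by positivity)
        _ = (p : ℝ) ^ (((t : ℤ) - 1) * d) := mul_one _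
    calc ‖((f.eval (u y) : ℤ_[p]) : ℚ_[p])‖ * ‖(Lagrange.basis T v y).coeff k‖
        ≤ ((p : ℝ) ^ (-(n : ℤ))) * ((p : ℝ) ^ (((t : ℤ) - 1) * d)) :=
          mul_le_mul h1 h2 (norm_nonneg _) (by positivity)
      _ = (p : ℝ) ^ (-(n : ℤ) + ((t : ℤ) - 1) * d) := (zpow_add₀ (ne_of_gt hp0) _ _).symm
      _ ≤ (p : ℝ) ^ (-(1 : ℤ)) := by
          apply zpow_le_zpow_right₀ (le_of_lt hp1)
          have hmul : d * t ≤ n + d - 1 := mul_cdiv_le hd n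
          have hZ : (d : ℤ) * (t : ℤ) ≤ (n : ℤ) + (d : ℤ) - 1 := by
            have h1 : d * t + 1 ≤ n + d := by omega
            have h2 : ((d * t + 1 : ℕ) : ℤ) ≤ ((n + d : ℕ) : ℤ) := Nat.cast_le.2 h1
            push_cast at h2
            linarith
          nlinarith [hZ]
  have hsum : ‖F.coeff k‖ ≤ (p : ℝ) ^ (-(1 : ℤ)) := by
    rw [hcoeff]
    exact IsUltrametricDist.norm_sum_le_of_forall_le_of_nonneg (by positivity) hterm
  have hunit1 : ‖f.coeff k‖ = 1 := PadicInt.isUnit_iff.1 hk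
  rw [hFdef, Polynomial.coeff_map] at hsum
  have : ‖PadicInt.Coe.ringHom (f.coeff k)‖ = ‖f.coeff k‖ := rfl
  rw [this, hunit1] at hsum
  have : (p : ℝ) ^ (-(1 : ℤ)) < 1 := by
    rw [zpow_neg, zpow_one]
    exact inv_lt_one_of_one_lt₀ hp1
  linarith

lemma fiber_card_cast {t n : ℕ} (h : t ≤ n) (y : ZMod (p ^ t)) :
    (univ.filter fun x : ZMod (p ^ n) =>
      ZMod.castHom (pow_dvd_pow p h) (ZMod (p ^ t)) x = y).card = p ^ (n - t) := by
  classical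
  have h1 := fiber_card_eq (ZMod.castHom (pow_dvd_pow p h) (ZMod (p ^ t))).toAddMonoidHom
    (cast_surj h) y
  simp only [RingHom.toAddMonoidHom_eq_coe, AddMonoidHom.coe_coe] at h1
  rw [ZMod.card, ZMod.card] at h1
  have h2 : p ^ (n - t) * p ^ t = p ^ n := by rw [← pow_add, Nat.sub_add_cancel h]
  have h3 : 0 < p ^ t := pow_pos hp.out.pos t
  exact Nat.eq_of_mul_eq_mul_right h3 (by rw [h1, h2])

lemma count_one_var {d : ℕ} (hd : 1 ≤ d) (n : ℕ) (f : Polynomial ℤ_[p])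
    (hdeg : f.natDegree ≤ d) (hprim : ∃ k, IsUnit (f.coeff k)) :
    (sol p n f).card * p ^ cdiv n d ≤ d * p ^ n := by
  classical
  rcases Nat.eq_zero_or_pos n with rfl | hn
  · rw [cdiv_zero hd]
    refine Nat.mul_le_mul_right _ ?_
    calc (sol p 0 f).card ≤ Fintype.card (ZMod (p ^ 0)) := by
          rw [← Finset.card_univ]; exact Finset.card_le_card (Finset.subset_univ _)
      _ = 1 := by rw [ZMod.card, pow_zero]
      _ ≤ d := hd
  · set t := cdiv n d with htdef
    have htn : t ≤ n := cdiv_le_self hd n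
    set r := ZMod.castHom (pow_dvd_pow p (cdiv_le_self hd n)) (ZMod (p ^ t)) with hrdef
    have hdecomp : (sol p n f).card = ∑ y ∈ (sol p n f).image r,
        ((sol p n f).filter fun x => r x = y).card :=
      Finset.card_eq_sum_card_fiberwise fun x hx => Finset.mem_image_of_mem r hx
    have hbound : (sol p n f).card ≤ d * p ^ (n - t) := by
      rw [hdecomp]
      calc ∑ y ∈ (sol p n f).image r, ((sol p n f).filter fun x => r x = y).card
          ≤ ∑ _y ∈ (sol p n f).image r, p ^ (n - t) := by
            refine Finset.sum_le_sum fun y _ => ?_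
            refine le_trans (Finset.card_le_card ?_) (le_of_eq (fiber_card_cast htn y))
            intro x hx
            simp only [Finset.mem_filter] at hx ⊢
            exact ⟨Finset.mem_univ x, hx.2⟩
        _ = ((sol p n f).image r).card * p ^ (n - t) := by
            rw [Finset.sum_const, smul_eq_mul]
        _ ≤ d * p ^ (n - t) :=
            Nat.mul_le_mul_right _ (key_image hd hn f hdeg hprim)
    calc (sol p n f).card * p ^ t ≤ (d * p ^ (n - t)) * p ^ t :=
          Nat.mul_le_mul_right _ hbound
      _ = d * p ^ n := by rw [mul_assoc, ← pow_add, Nat.sub_add_cancel htn]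

open scoped Classical in
noncomputable def msol (p : ℕ) [Fact p.Prime] (s n : ℕ) (f : MvPolynomial (Fin s) ℤ_[p]) :
    Finset (Fin s → ZMod (p ^ n)) :=
  univ.filter fun x => (p : ℤ_[p]) ^ n ∣ MvPolynomial.eval (fun i => ((x i).val : ℤ_[p])) f

/-- the one-variable polynomial obtained by specializing all but the first variable -/
noncomputable def hpoly {p : ℕ} [Fact p.Prime] {r : ℕ} (f : MvPolynomial (Fin (r + 1)) ℤ_[p])
    (z : Fin r → ℤ_[p]) : Polynomial ℤ_[p] :=
  Polynomial.map (MvPolynomial.eval z) (MvPolynomial.finSuccEquiv ℤ_[p] r f)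

lemma hpoly_natDegree {r d : ℕ} (f : MvPolynomial (Fin (r + 1)) ℤ_[p])
    (hdeg : f.totalDegree ≤ d) (z : Fin r → ℤ_[p]) : (hpoly f z).natDegree ≤ d :=
  le_trans (Polynomial.natDegree_map_le)
    (le_trans (le_of_eq (MvPolynomial.natDegree_finSuccEquiv f))
      (le_trans (MvPolynomial.degreeOf_le_totalDegree f 0) hdeg))

lemma hpoly_coeff {r : ℕ} (f : MvPolynomial (Fin (r + 1)) ℤ_[p]) (z : Fin r → ℤ_[p]) (i : ℕ) :
    (hpoly f z).coeff i
      = MvPolynomial.eval z ((MvPolynomial.finSuccEquiv ℤ_[p] r f).coeff i) :=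
  Polynomial.coeff_map _ _

lemma mem_msol_cons {r n : ℕ} (f : MvPolynomial (Fin (r + 1)) ℤ_[p])
    (x' : Fin r → ZMod (p ^ n)) (x₀ : ZMod (p ^ n)) :
    (Fin.cons x₀ x' ∈ msol p (r + 1) n f)
      ↔ (p : ℤ_[p]) ^ n ∣ (hpoly f (fun i => ((x' i).val : ℤ_[p]))).eval ((x₀.val : ℤ_[p])) := by
  classical
  rw [msol, Finset.mem_filter]
  have hl : (fun i => (((Fin.cons x₀ x' : Fin (r+1) → ZMod (p^n)) i).val : ℤ_[p]))
      = Fin.cons ((x₀.val : ℤ_[p])) (fun i => ((x' i).val : ℤ_[p])) := by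
    funext i
    refine Fin.cases ?_ ?_ i
    · rw [Fin.cons_zero, Fin.cons_zero]
    · intro k
      rw [Fin.cons_succ, Fin.cons_succ]
  rw [hl, MvPolynomial.eval_eq_eval_mv_eval']
  simp only [Finset.mem_univ, true_and]
  rfl

lemma unit_coeff_exists {r d : ℕ} (f : MvPolynomial (Fin (r + 1)) ℤ_[p])
    (hdeg : f.totalDegree ≤ d) (hunit : ∃ m, IsUnit (MvPolynomial.coeff m f)) :
    ∃ i₀, i₀ ≤ d ∧ ∃ m', IsUnit (MvPolynomial.coeff m'
      ((MvPolynomial.finSuccEquiv ℤ_[p] r f).coeff i₀)) := by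
  obtain ⟨m, hm⟩ := hunit
  refine ⟨m 0, ?_, Finsupp.tail m, ?_⟩
  · have hsupp : m ∈ f.support := MvPolynomial.mem_support_iff.2 hm.ne_zero
    have h1 : m 0 ≤ m.sum fun _ e => e := by
      rcases Nat.eq_zero_or_pos (m 0) with h | h
      · omega
      · have h0 : (0 : Fin (r+1)) ∈ m.support := Finsupp.mem_support_iff.2 (by omega)
        exact Finset.single_le_sum (f := fun a => m a) (fun _ _ => Nat.zero_le _) h0
    exact le_trans h1 (le_trans (MvPolynomial.le_totalDegree hsupp) hdeg)
  · rw [MvPolynomial.finSuccEquiv_coeff_coeff, Finsupp.cons_tail]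
    exact hm

lemma gcoeff_totalDegree {r d : ℕ} (f : MvPolynomial (Fin (r + 1)) ℤ_[p])
    (hdeg : f.totalDegree ≤ d) (i : ℕ) :
    ((MvPolynomial.finSuccEquiv ℤ_[p] r f).coeff i).totalDegree ≤ d := by
  by_cases h : (MvPolynomial.finSuccEquiv ℤ_[p] r f).coeff i = 0
  · rw [h, MvPolynomial.totalDegree_zero]; exact Nat.zero_le d
  · have := MvPolynomial.totalDegree_coeff_finSuccEquiv_add_le f i h
    omega

/-- componentwise reduction as an additive monoid hom -/
def picast {p : ℕ} [Fact p.Prime] {k t n : ℕ} (h : t ≤ n) :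
    (Fin k → ZMod (p ^ n)) →+ (Fin k → ZMod (p ^ t)) where
  toFun := fun x i => ZMod.castHom (pow_dvd_pow p h) (ZMod (p ^ t)) (x i)
  map_zero' := funext fun i => map_zero _
  map_add' := fun a b => funext fun i => map_add _ _ _

lemma picast_surj {k t n : ℕ} (h : t ≤ n) :
    Function.Surjective (picast (p := p) (k := k) h) := by
  intro y
  refine ⟨fun i => ((cast_surj (p := p) h) (y i)).choose, funext fun i => ?_⟩
  exact ((cast_surj (p := p) h) (y i)).choose_spec

set_option maxHeartbeats 1000000 in
open scoped Classical in
theorem main {p : ℕ} [hp : Fact p.Prime] {d : ℕ} (hd : 1 ≤ d) :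
    ∀ r : ℕ, ∀ n : ℕ, ∀ f : MvPolynomial (Fin (r + 1)) ℤ_[p],
      f.totalDegree ≤ d → (∃ m, IsUnit (MvPolynomial.coeff m f)) →
      (msol p (r + 1) n f).card * p ^ cdiv n d
        ≤ d ^ (r + 1) * (n + r).choose r * p ^ (n * (r + 1)) := by
  intro r
  induction r with
  | zero =>
    intro n f hdeg hunit
    set z : Fin 0 → ℤ_[p] := fun _ => 0 with hzdef
    have hcard : (msol p 1 n f).card = (sol p n (hpoly f z)).card := by
      apply Finset.card_bij (fun x _ => x 0)
      · intro x hx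
        have hx' : x = Fin.cons (x 0) (Fin.tail x) := (Fin.cons_self_tail x).symm
        rw [hx', mem_msol_cons] at hx
        have hfn : (fun i : Fin 0 => (((Fin.tail x) i).val : ℤ_[p])) = z :=
          funext fun i => i.elim0
        rw [hfn] at hx
        rw [sol, Finset.mem_filter]
        exact ⟨Finset.mem_univ _, hx⟩
      · intro x hx x2 hx2 h0
        funext i
        refine Fin.cases ?_ (fun k => k.elim0) i
        exact h0
      · intro x₀ hx₀
        refine ⟨Fin.cons x₀ (fun i => i.elim0), ?_, Fin.cons_zero _ _⟩
        rw [mem_msol_cons]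
        have hfn : (fun i : Fin 0 => (((fun i : Fin 0 => (i.elim0 : ZMod (p^n))) i).val : ℤ_[p])) = z :=
          funext fun i => i.elim0
        rw [hfn]
        rw [sol, Finset.mem_filter] at hx₀
        exact hx₀.2
    obtain ⟨i₀, hi₀d, m', hm'⟩ := unit_coeff_exists f hdeg hunit
    have hprim : ∃ k, IsUnit ((hpoly f z).coeff k) := by
      refine ⟨i₀, ?_⟩
      obtain ⟨a, ha⟩ := MvPolynomial.C_surjective (Fin 0)
        ((MvPolynomial.finSuccEquiv ℤ_[p] 0 f).coeff i₀)
      rw [hpoly_coeff, ← ha, MvPolynomial.eval_C]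
      have hz0 : m' = 0 := Subsingleton.elim m' 0
      rw [← ha, hz0, MvPolynomial.coeff_C] at hm'
      simpa using hm'
    have hcv := count_one_var hd n (hpoly f z) (hpoly_natDegree f hdeg z) hprim
    rw [hcard]
    calc (sol p n (hpoly f z)).card * p ^ cdiv n d ≤ d * p ^ n := hcv
      _ = d ^ (0 + 1) * (n + 0).choose 0 * p ^ (n * (0 + 1)) := by simp
  | succ r IH =>
    intro n f hdeg hunit
    obtain ⟨i₀, hi₀d, m', hm'⟩ := unit_coeff_exists f hdeg hunit
    set G := (MvPolynomial.finSuccEquiv ℤ_[p] (r+1) f).coeff i₀ with hGdef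
    set lft : (Fin (r+1) → ZMod (p^n)) → (Fin (r+1) → ℤ_[p]) :=
      fun x' i => ((x' i).val : ℤ_[p]) with hlftdef
    set P0 : (Fin (r+1) → ZMod (p^n)) → ℕ → Prop :=
      fun x' j => ∀ i, i ≤ d → (p:ℤ_[p])^j ∣ (hpoly f (lft x')).coeff i with hP0def
    set jv : (Fin (r+1) → ZMod (p^n)) → ℕ := fun x' => Nat.findGreatest (P0 x') n with hjvdef
    have hjv_le : ∀ x', jv x' ≤ n := fun x' => Nat.findGreatest_le n
    have hjv_spec : ∀ x', P0 x' (jv x') := by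
      intro x'
      apply Nat.findGreatest_spec (Nat.zero_le n)
      intro i _
      rw [pow_zero]
      exact one_dvd _
    set cnt0 : (Fin (r+1) → ZMod (p^n)) → ℕ := fun x' =>
      (univ.filter fun x₀ : ZMod (p^n) => Fin.cons x₀ x' ∈ msol p (r+2) n f).card with hcnt0def
    -- per-x' bound
    have PERX : ∀ x', cnt0 x' * p ^ cdiv (n - jv x') d ≤ d * p ^ n := by
      intro x'
      have hjn : jv x' ≤ n := hjv_le x'
      have hdvdall : ∀ i, (p:ℤ_[p])^(jv x') ∣ (hpoly f (lft x')).coeff i := by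
        intro i
        by_cases hid : i ≤ d
        · exact hjv_spec x' i hid
        · have hz : (hpoly f (lft x')).coeff i = 0 :=
            Polynomial.coeff_eq_zero_of_natDegree_lt
              (lt_of_le_of_lt (hpoly_natDegree f hdeg (lft x')) (by omega))
          rw [hz]
          exact dvd_zero _
      obtain ⟨g, hg⟩ := (Polynomial.C_dvd_iff_dvd_coeff ((p:ℤ_[p])^(jv x'))
        (hpoly f (lft x'))).2 hdvdall
      rcases Nat.lt_or_ge (jv x') n with hlt | hge
      case inr =>
        have hjeq : n - jv x' = 0 := by omega
        rw [hjeq, cdiv_zero hd, pow_zero, mul_one]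
        calc cnt0 x' ≤ Fintype.card (ZMod (p^n)) := by
              rw [← Finset.card_univ]
              exact Finset.card_le_card (Finset.subset_univ _)
          _ = p^n := ZMod.card _
          _ ≤ d * p^n := Nat.le_mul_of_pos_left _ hd
      case inl =>
        have hjeq : Nat.findGreatest (P0 x') n = jv x' := by rw [hjvdef]
        have hnot : ¬ P0 x' (jv x' + 1) :=
          Nat.findGreatest_is_greatest (n := n) (by omega) (by omega)
        have hnot' : ¬ ∀ i, i ≤ d → (p:ℤ_[p])^(jv x' + 1) ∣ (hpoly f (lft x')).coeff i := hnot
        push_neg at hnot'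
        obtain ⟨i₁, hi₁d, hi₁⟩ := hnot'
        have hpne : ((p:ℤ_[p])) ≠ 0 := by exact_mod_cast hp.out.ne_zero
        have hpj_ne : ((p:ℤ_[p])^(jv x')) ≠ 0 := pow_ne_zero _ hpne
        have hgunit : ∃ k, IsUnit (g.coeff k) := by
          refine ⟨i₁, ?_⟩
          have hco : (hpoly f (lft x')).coeff i₁ = (p:ℤ_[p])^(jv x') * g.coeff i₁ := by
            rw [hg, Polynomial.coeff_C_mul]
          by_contra hnu
          apply hi₁
          have hpd : (p:ℤ_[p]) ∣ g.coeff i₁ :=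
            (PadicInt.norm_lt_one_iff_dvd _).1 (PadicInt.not_isUnit_iff.1 hnu)
          rw [hco, pow_succ]
          exact mul_dvd_mul (dvd_refl _) hpd
        have hgdeg : g.natDegree ≤ d := by
          have heq : (hpoly f (lft x')).natDegree = g.natDegree := by
            rw [hg]; exact Polynomial.natDegree_C_mul hpj_ne
          rw [← heq]
          exact hpoly_natDegree f hdeg (lft x')
        have hcond : ∀ x₀ : ZMod (p^n), (Fin.cons x₀ x' ∈ msol p (r+2) n f)
            ↔ (p:ℤ_[p])^(n - jv x') ∣ g.eval
              (((ZMod.castHom (pow_dvd_pow p (Nat.sub_le n (jv x')))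
                (ZMod (p^(n - jv x'))) x₀).val : ℤ_[p])) := by
          intro x₀
          rw [mem_msol_cons, hg, Polynomial.eval_mul, Polynomial.eval_C]
          have hsplit : (p:ℤ_[p])^n = (p:ℤ_[p])^(jv x') * (p:ℤ_[p])^(n - jv x') := by
            rw [← pow_add]; congr 1; omega
          rw [hsplit, mul_dvd_mul_iff_left hpj_ne]
          exact dvd_eval_congr g (by rw [cast_lift (Nat.sub_le n (jv x')), toZModPow_lift])
        have hcnt : cnt0 x' ≤ p^(jv x') * (sol p (n - jv x') g).card := by
          calc cnt0 x'
              = (univ.filter fun x₀ : ZMod (p^n) =>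
                  Fin.cons x₀ x' ∈ msol p (r+2) n f).card := rfl
            _ = (univ.filter fun x₀ : ZMod (p^n) => (p:ℤ_[p])^(n - jv x') ∣ g.eval
                  (((ZMod.castHom (pow_dvd_pow p (Nat.sub_le n (jv x')))
                    (ZMod (p^(n - jv x'))) x₀).val : ℤ_[p]))).card := by
                apply congrArg
                exact Finset.filter_congr fun x₀ _ => hcond x₀
            _ ≤ p^(jv x') * (univ.filter fun y : ZMod (p^(n - jv x')) =>
                  (p:ℤ_[p])^(n - jv x') ∣ g.eval ((y.val : ℤ_[p]))).card := by
                refine count_comp_le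
                  (ZMod.castHom (pow_dvd_pow p (Nat.sub_le n (jv x')))
                    (ZMod (p^(n - jv x')))).toAddMonoidHom (cast_surj (Nat.sub_le n (jv x')))
                  (p^(jv x')) ?_
                  (fun y : ZMod (p^(n - jv x')) =>
                    (p:ℤ_[p])^(n - jv x') ∣ g.eval ((y.val : ℤ_[p])))
                rw [ZMod.card, ZMod.card, ← pow_add]
                congr 1
                omega
            _ = p^(jv x') * (sol p (n - jv x') g).card := by rw [sol]
        calc cnt0 x' * p ^ cdiv (n - jv x') d
            ≤ (p^(jv x') * (sol p (n - jv x') g).card) * p ^ cdiv (n - jv x') d :=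
              Nat.mul_le_mul_right _ hcnt
          _ = p^(jv x') * ((sol p (n - jv x') g).card * p ^ cdiv (n - jv x') d) := by ring
          _ ≤ p^(jv x') * (d * p^(n - jv x')) :=
              Nat.mul_le_mul_left _ (count_one_var hd (n - jv x') g hgdeg hgunit)
          _ = d * (p^(jv x') * p^(n - jv x')) := by ring
          _ = d * p^n := by rw [← pow_add]; congr 2; omega
    -- level counts
    have LEVEL : ∀ j, j ≤ n → (univ.filter fun x' => j ≤ jv x').card * p ^ cdiv j d
        ≤ p^((n-j)*(r+1)) * (d^(r+1) * (j+r).choose r * p^(j*(r+1))) := by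
      intro j hjn
      have hsub1 : (univ.filter fun x' => j ≤ jv x')
          ⊆ (univ.filter fun x' => (p:ℤ_[p])^j ∣ MvPolynomial.eval (lft x') G) := by
        intro x' hx'
        simp only [Finset.mem_filter, Finset.mem_univ, true_and] at hx' ⊢
        have hsp := hjv_spec x' i₀ hi₀d
        rw [hpoly_coeff] at hsp
        exact dvd_trans (pow_dvd_pow _ hx') hsp
      have hQ : ∀ x' : Fin (r+1) → ZMod (p^n),
          ((p:ℤ_[p])^j ∣ MvPolynomial.eval (lft x') G)
          ↔ ((p:ℤ_[p])^j ∣ MvPolynomial.eval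
              (fun i => (((picast (p:=p) hjn x' i).val : ℤ_[p]))) G) := by
        intro x'
        apply dvd_meval_congr
        intro i
        rw [hlftdef]
        simp only
        rw [cast_lift hjn, toZModPow_lift]
        rfl
      have hcount1 : (univ.filter fun x' => (p:ℤ_[p])^j ∣ MvPolynomial.eval (lft x') G).card
          ≤ p^((n-j)*(r+1)) * (msol p (r+1) j G).card := by
        calc (univ.filter fun x' => (p:ℤ_[p])^j ∣ MvPolynomial.eval (lft x') G).card
            = (univ.filter fun x' : Fin (r+1) → ZMod (p^n) => (p:ℤ_[p])^j ∣ MvPolynomial.eval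
                (fun i => (((picast (p:=p) hjn x' i).val : ℤ_[p]))) G).card := by
              apply congrArg
              exact Finset.filter_congr fun x' _ => hQ x'
          _ ≤ p^((n-j)*(r+1)) * (univ.filter fun y : Fin (r+1) → ZMod (p^j) =>
                (p:ℤ_[p])^j ∣ MvPolynomial.eval (fun i => ((y i).val : ℤ_[p])) G).card := by
              refine count_comp_le (picast (p:=p) hjn) (picast_surj hjn)
                (p^((n-j)*(r+1))) ?_
                (fun y : Fin (r+1) → ZMod (p^j) =>
                  (p:ℤ_[p])^j ∣ MvPolynomial.eval (fun i => ((y i).val : ℤ_[p])) G)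
              rw [Fintype.card_fun, Fintype.card_fun, ZMod.card, ZMod.card, Fintype.card_fin,
                ← pow_mul, ← pow_mul, ← pow_add]
              congr 1
              have h1 : (n-j)*(r+1) + j*(r+1) = n*(r+1) := by
                rw [← add_mul, Nat.sub_add_cancel hjn]
              omega
          _ = p^((n-j)*(r+1)) * (msol p (r+1) j G).card := by rw [msol]
      have hIH := IH j G (gcoeff_totalDegree f hdeg i₀) ⟨m', hm'⟩
      calc (univ.filter fun x' => j ≤ jv x').card * p ^ cdiv j d
          ≤ (univ.filter fun x' => (p:ℤ_[p])^j ∣ MvPolynomial.eval (lft x') G).card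
            * p ^ cdiv j d := Nat.mul_le_mul_right _ (Finset.card_le_card hsub1)
        _ ≤ (p^((n-j)*(r+1)) * (msol p (r+1) j G).card) * p ^ cdiv j d :=
            Nat.mul_le_mul_right _ hcount1
        _ = p^((n-j)*(r+1)) * ((msol p (r+1) j G).card * p ^ cdiv j d) := by ring
        _ ≤ p^((n-j)*(r+1)) * (d^(r+1) * (j+r).choose r * p^(j*(r+1))) :=
            Nat.mul_le_mul_left _ hIH
    -- decomposition of the count
    have DEC : (msol p (r+2) n f).card = ∑ x' : Fin (r+1) → ZMod (p^n), cnt0 x' := by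
      rw [Finset.card_eq_sum_card_fiberwise
        (f := fun x => Fin.tail x) (t := univ) (fun x _ => Finset.mem_univ _)]
      refine Finset.sum_congr rfl fun x' _ => ?_
      apply Finset.card_bij (fun x _ => x 0)
      · intro x hx
        obtain ⟨hx1, hx2⟩ := Finset.mem_filter.1 hx
        simp only [Finset.mem_filter, Finset.mem_univ, true_and]
        rw [← hx2, Fin.cons_self_tail]
        exact hx1
      · intro x hx x2 hx2 h0
        have h1 := (Finset.mem_filter.1 hx).2
        have h2 := (Finset.mem_filter.1 hx2).2
        calc x = Fin.cons (x 0) (Fin.tail x) := (Fin.cons_self_tail x).symm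
          _ = Fin.cons (x2 0) (Fin.tail x2) := by rw [h0, h1, h2]
          _ = x2 := Fin.cons_self_tail x2
      · intro x₀ hx₀
        simp only [Finset.mem_filter, Finset.mem_univ, true_and] at hx₀
        refine ⟨Fin.cons x₀ x', Finset.mem_filter.2 ⟨hx₀, Fin.tail_cons _ _⟩, Fin.cons_zero _ _⟩
    have hsplitsum : ∑ x' : Fin (r+1) → ZMod (p^n), cnt0 x'
        = ∑ j ∈ range (n+1), ∑ x' ∈ univ.filter (fun x' => jv x' = j), cnt0 x' :=
      (Finset.sum_fiberwise_of_maps_to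
        (fun x' _ => Finset.mem_range.2 (by have := hjv_le x'; omega)) cnt0).symm
    rw [DEC, hsplitsum, Finset.sum_mul]
    have hperj : ∀ j ∈ range (n+1),
        (∑ x' ∈ univ.filter (fun x' => jv x' = j), cnt0 x') * p ^ cdiv n d
        ≤ d^(r+2) * (j+r).choose r * p^(n*(r+2)) := by
      intro j hj
      have hjn : j ≤ n := by have := Finset.mem_range.1 hj; omega
      have hc := cdiv_superadd hd hjn
      have hp1 : 1 ≤ p := hp.out.pos
      have he : (n-j)*(r+1) + j*(r+1) + n = n*(r+2) := by
        have h1 : (n-j)*(r+1) + j*(r+1) = n*(r+1) := by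
          rw [← add_mul, Nat.sub_add_cancel hjn]
        have h2 : n*(r+1) + n = n*(r+2) := by ring
        omega
      calc (∑ x' ∈ univ.filter (fun x' => jv x' = j), cnt0 x') * p ^ cdiv n d
          ≤ (∑ x' ∈ univ.filter (fun x' => jv x' = j), cnt0 x')
              * (p ^ cdiv j d * p ^ cdiv (n-j) d) := by
            apply Nat.mul_le_mul_left
            rw [← pow_add]
            exact Nat.pow_le_pow_right hp1 hc
        _ = ((∑ x' ∈ univ.filter (fun x' => jv x' = j), cnt0 x') * p ^ cdiv (n-j) d)
              * p ^ cdiv j d := by ring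
        _ = (∑ x' ∈ univ.filter (fun x' => jv x' = j), cnt0 x' * p ^ cdiv (n-j) d)
              * p ^ cdiv j d := by rw [Finset.sum_mul]
        _ ≤ (∑ _x' ∈ univ.filter (fun x' => jv x' = j), d * p^n) * p ^ cdiv j d := by
            apply Nat.mul_le_mul_right
            refine Finset.sum_le_sum fun x' hx' => ?_
            have hxj : jv x' = j := (Finset.mem_filter.1 hx').2
            have hPP := PERX x'
            rw [hxj] at hPP
            exact hPP
        _ = ((univ.filter (fun x' => jv x' = j)).card * p ^ cdiv j d) * (d * p^n) := by
            rw [Finset.sum_const, smul_eq_mul]; ring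
        _ ≤ ((univ.filter (fun x' => j ≤ jv x')).card * p ^ cdiv j d) * (d * p^n) := by
            apply Nat.mul_le_mul_right
            apply Nat.mul_le_mul_right
            apply Finset.card_le_card
            apply Finset.monotone_filter_right
            intro x' _ hx'
            exact le_of_eq hx'.symm
        _ ≤ (p^((n-j)*(r+1)) * (d^(r+1) * (j+r).choose r * p^(j*(r+1)))) * (d * p^n) :=
            Nat.mul_le_mul_right _ (LEVEL j hjn)
        _ = (d^(r+1) * d) * (j+r).choose r * (p^((n-j)*(r+1)) * p^(j*(r+1)) * p^n) := by ring
        _ = d^(r+2) * (j+r).choose r * p^(n*(r+2)) := by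
            rw [← pow_succ, ← pow_add, ← pow_add, he]
    calc ∑ j ∈ range (n+1), (∑ x' ∈ univ.filter (fun x' => jv x' = j), cnt0 x') * p ^ cdiv n d
        ≤ ∑ j ∈ range (n+1), d^(r+2) * (j+r).choose r * p^(n*(r+2)) :=
          Finset.sum_le_sum hperj
      _ = d^(r+2) * p^(n*(r+2)) * ∑ j ∈ range (n+1), (j+r).choose r := by
          rw [Finset.mul_sum]
          exact Finset.sum_congr rfl fun j _ => by ring
      _ = d^(r+2) * (n+r+1).choose (r+1) * p^(n*(r+2)) := by rw [hockey r n]; ring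
      _ = d ^ (r+1+1) * (n + (r+1)).choose (r+1) * p ^ (n * (r+1+1)) := rfl


end S14

open S14 in
/-- **Lemma (solutions of polynomial congruences, several variables).**
Let `p` be a prime, `s, d ≥ 1`, and `f ∈ ℤ_[p][X₁, …, X_s]` of total degree `≤ d` which is
not congruent to zero modulo `p`. Then for every `n ≥ 0` the number of solutions of
`f ≡ 0 (mod pⁿ)` in `(ℤ/pⁿℤ)^s` is at most `d^s ⬝ C(n+s-1, s-1) ⬝ p^(ns - n/d)`. -/
theorem stmt_14 (p : ℕ) [Fact p.Prime] (s d : ℕ) (hs : 1 ≤ s) (hd : 1 ≤ d)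
    (f : MvPolynomial (Fin s) ℤ_[p]) (hdeg : f.totalDegree ≤ d)
    (hunit : ∃ m, IsUnit (MvPolynomial.coeff m f)) (n : ℕ) :
    (Nat.card {x : Fin s → ZMod (p ^ n) //
        MvPolynomial.eval x (MvPolynomial.map (PadicInt.toZModPow n) f) = 0} : ℝ) ≤
      (d : ℝ) ^ s * (Nat.choose (n + s - 1) (s - 1) : ℝ) *
        (p : ℝ) ^ ((n : ℝ) * (s : ℝ) - (n : ℝ) / (d : ℝ)) := by
  classical
  obtain ⟨r, rfl⟩ : ∃ r, s = r + 1 := ⟨s - 1, by omega⟩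
  -- identify the cardinality with the msol count
  have hPiff : ∀ x : Fin (r+1) → ZMod (p^n),
      (MvPolynomial.eval x (MvPolynomial.map (PadicInt.toZModPow n) f) = 0)
      ↔ ((p:ℤ_[p])^n ∣ MvPolynomial.eval (fun i => ((x i).val : ℤ_[p])) f) := by
    intro x
    rw [dvd_iff_toZModPow, mbridge]
    have hfn : (fun i => PadicInt.toZModPow n (((x i).val : ℤ_[p]))) = x :=
      funext fun i => toZModPow_lift (x i)
    rw [hfn]
  have hcardeq : Nat.card {x : Fin (r+1) → ZMod (p ^ n) //
      MvPolynomial.eval x (MvPolynomial.map (PadicInt.toZModPow n) f) = 0}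
      = (msol p (r+1) n f).card := by
    rw [Nat.card_eq_fintype_card, Fintype.card_subtype, msol]
    apply congrArg
    apply Finset.filter_congr
    intro x _
    exact hPiff x
  have hmain := main (p := p) hd r n f hdeg hunit
  -- divide out in ℕ
  have htle : cdiv n d ≤ n * (r + 1) :=
    le_trans (cdiv_le_self hd n) (Nat.le_mul_of_pos_right n (by omega))
  have hNnat : (msol p (r+1) n f).card
      ≤ d ^ (r+1) * (n + r).choose r * p ^ (n * (r+1) - cdiv n d) := by
    have hppos : 0 < p ^ cdiv n d := pow_pos (Fact.out : p.Prime).pos _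
    apply Nat.le_of_mul_le_mul_right _ hppos
    calc (msol p (r+1) n f).card * p ^ cdiv n d
        ≤ d ^ (r+1) * (n + r).choose r * p ^ (n * (r+1)) := hmain
      _ = d ^ (r+1) * (n + r).choose r * p ^ (n * (r+1) - cdiv n d) * p ^ cdiv n d := by
          conv_rhs => rw [mul_assoc, ← pow_add, Nat.sub_add_cancel htle]
  -- pass to the reals
  have hp1R : (1:ℝ) ≤ (p:ℝ) := by
    have h := (Fact.out : p.Prime).one_lt
    have : 1 ≤ p := by omega
    exact_mod_cast this
  have hd0R : (0:ℝ) < (d:ℝ) := by exact_mod_cast hd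
  have hs1 : n + (r + 1) - 1 = n + r := by omega
  have hs2 : (r + 1) - 1 = r := by omega
  rw [hcardeq, hs1, hs2]
  have hexp : ((n * (r+1) - cdiv n d : ℕ) : ℝ) ≤ (n : ℝ) * ((r+1 : ℕ) : ℝ) - (n : ℝ) / (d : ℝ) := by
    rw [Nat.cast_sub htle]
    have h1 : (n : ℝ) / (d : ℝ) ≤ (cdiv n d : ℝ) := by
      rw [div_le_iff₀ hd0R]
      have := le_mul_cdiv hd n
      have h2 : (n:ℝ) ≤ (d:ℝ) * (cdiv n d : ℝ) := by exact_mod_cast this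
      linarith
    push_cast
    push_cast at h1
    linarith
  calc ((msol p (r+1) n f).card : ℝ)
      ≤ ((d ^ (r+1) * (n + r).choose r * p ^ (n * (r+1) - cdiv n d) : ℕ) : ℝ) := by
        exact_mod_cast hNnat
    _ = (d:ℝ) ^ (r+1) * ((n + r).choose r : ℝ)
          * ((p:ℝ) ^ ((n * (r+1) - cdiv n d : ℕ) : ℝ)) := by
        rw [Real.rpow_natCast]
        push_cast
        ring
    _ ≤ (d:ℝ) ^ (r+1) * ((n + r).choose r : ℝ)
          * ((p:ℝ) ^ ((n : ℝ) * ((r+1 : ℕ) : ℝ) - (n : ℝ) / (d : ℝ))) := by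
        apply mul_le_mul_of_nonneg_left _ (by positivity)
        exact Real.rpow_le_rpow_of_exponent_le hp1R hexp
end

section
/- Let p be a prime, d ≥ 1 an integer, and let f ∈ ℤ_p[X] be a polynomial in one variable of degree ≤ d which is not congruent to the zero polynomial modulo p (i.e., at least one coefficient of f is a p-adic unit). Then for every integer n ≥ 0, the number of elements x ∈ ℤ/p^nℤ satisfying f̄(x) = 0, where f̄ ∈ (ℤ/p^nℤ)[X] is the reduction of f modulo p^n, is at most d · p^(n − n/d), where the last factor is the real number p raised to the real exponent n − n/d. -/
open Polynomial Finset

/-- **Lemma (solutions of polynomial congruences, one variable).**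
Let `p` be a prime, `d ≥ 1`, and `f ∈ ℤ_[p][X]` of degree `≤ d` which is not congruent to
zero modulo `p`. Then for every `n ≥ 0` the number of solutions of `f ≡ 0 (mod pⁿ)` in
`ℤ/pⁿℤ` is at most `d ⬝ p^(n - n/d)`. -/
theorem stmt_15 (p : ℕ) [Fact p.Prime] (d : ℕ) (hd : 1 ≤ d)
    (f : Polynomial ℤ_[p]) (hdeg : f.natDegree ≤ d)
    (hunit : ∃ m, IsUnit (f.coeff m)) (n : ℕ) :
    (Nat.card {x : ZMod (p ^ n) //
        Polynomial.eval x (f.map (PadicInt.toZModPow n)) = 0} : ℝ) ≤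
      (d : ℝ) * (p : ℝ) ^ ((n : ℝ) - (n : ℝ) / (d : ℝ)) := by
  classical
  have hp := (Fact.out : p.Prime)
  have hp1 : 1 < p := hp.one_lt
  rcases Nat.eq_zero_or_pos n with hn | hn
  · subst hn
    have h1 : Nat.card {x : ZMod (p ^ 0) //
        Polynomial.eval x (f.map (PadicInt.toZModPow 0)) = 0} ≤ 1 := by
      have h2 : Nat.card {x : ZMod (p ^ 0) //
          Polynomial.eval x (f.map (PadicInt.toZModPow 0)) = 0} ≤ Nat.card (ZMod (p ^ 0)) :=
        Nat.card_le_card_of_injective Subtype.val Subtype.val_injective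
      have h3 : Nat.card (ZMod (p ^ 0)) = 1 := by
        rw [pow_zero]; simp [Nat.card_eq_fintype_card]
      omega
    calc (Nat.card {x : ZMod (p ^ 0) //
        Polynomial.eval x (f.map (PadicInt.toZModPow 0)) = 0} : ℝ) ≤ 1 := by exact_mod_cast h1
      _ ≤ (d:ℝ) := by exact_mod_cast hd
      _ = (d : ℝ) * (p : ℝ) ^ (((0:ℕ) : ℝ) - ((0:ℕ) : ℝ) / (d : ℝ)) := by
          simp
  -- main case n ≥ 1
  set m : ℕ := (n - 1) / d + 1 with hmdef
  have hA : n - 1 < ((n - 1) / d + 1) * d := by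
    have h := (Nat.div_lt_iff_lt_mul (show 0 < d by omega)).1
      (Nat.lt_succ_self ((n - 1) / d))
    simpa [Nat.succ_eq_add_one] using h
  have hnm : n ≤ m * d := by rw [hmdef]; omega
  have hm1 : (m - 1) * d ≤ n - 1 := by
    rw [hmdef, Nat.add_sub_cancel]
    exact Nat.div_mul_le_self _ _
  have hmn : m ≤ n := by
    have := Nat.div_le_self (n - 1) d
    omega
  have hm1' : 1 ≤ m := by rw [hmdef]; exact Nat.le_add_left 1 _
  haveI : NeZero (p ^ n) := ⟨pow_ne_zero _ hp.ne_zero⟩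
  haveI : NeZero (p ^ m) := ⟨pow_ne_zero _ hp.ne_zero⟩
  set g := f.map (PadicInt.toZModPow (p := p) n) with hg
  set S : Finset (ZMod (p ^ n)) := Finset.univ.filter (fun x => Polynomial.eval x g = 0)
    with hS
  have hcard : Nat.card {x : ZMod (p ^ n) // Polynomial.eval x g = 0} = S.card := by
    rw [Nat.card_eq_fintype_card, Fintype.card_subtype]
  set c : ZMod (p ^ n) → ZMod (p ^ m) :=
    fun x => ZMod.castHom (pow_dvd_pow p hmn) (ZMod (p ^ m)) x with hc
  -- fibers of c have size ≤ p^(n-m)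
  have fiber : ∀ a ∈ S.image c, (S.filter (fun x => c x = a)).card ≤ p ^ (n - m) := by
    intro a _
    have : (S.filter (fun x => c x = a)).card ≤ (Finset.range (p ^ (n - m))).card := by
      apply Finset.card_le_card_of_injOn (fun x => x.val / p ^ m)
      · intro x hx
        simp only [Finset.mem_coe, Finset.mem_range]
        have hxlt : x.val < p ^ n := ZMod.val_lt x
        have hpn : p ^ n = p ^ m * p ^ (n - m) := by
          rw [← pow_add, ← Nat.add_sub_assoc hmn, Nat.add_sub_cancel_left]
        exact Nat.div_lt_of_lt_mul (by omega)
      · intro x hx y hy hxy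
        simp only [Finset.mem_coe, Finset.mem_filter] at hx hy
        have hcx : (x.val : ZMod (p ^ m)) = (y.val : ZMod (p ^ m)) := by
          have h := hx.2.trans hy.2.symm
          rw [hc] at h
          simp only [ZMod.castHom_apply] at h
          rwa [← ZMod.natCast_val, ← ZMod.natCast_val] at h
        rw [ZMod.natCast_eq_natCast_iff'] at hcx
        have hxy' : x.val / p ^ m = y.val / p ^ m := hxy
        have hval : x.val = y.val := by
          rw [← Nat.div_add_mod x.val (p ^ m), ← Nat.div_add_mod y.val (p ^ m), hcx, hxy']
        exact ZMod.val_injective _ hval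
    simpa using this
  have h1 : S.card ≤ p ^ (n - m) * (S.image c).card :=
    Finset.card_le_mul_card_image S _ fiber
  -- main step: the image has at most d elements
  have h2 : (S.image c).card ≤ d := by
    by_contra hcon
    push_neg at hcon
    obtain ⟨T, hTsub, hTcard⟩ := Finset.exists_subset_card_eq
      (show d + 1 ≤ (S.image c).card by omega)
    have hpre : ∀ y ∈ T, ∃ x, x ∈ S ∧ c x = y := by
      intro y hy
      obtain ⟨x, hx1, hx2⟩ := Finset.mem_image.1 (hTsub hy)
      exact ⟨x, hx1, hx2⟩
    choose! x hxS hxc using hpre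
    set ξ : ZMod (p ^ m) → ℤ_[p] := fun y => ((x y).val : ℤ_[p]) with hξ
    set ch : ℤ_[p] →+* ℚ_[p] := PadicInt.Coe.ringHom with hch
    set v : ZMod (p ^ m) → ℚ_[p] := fun y => ch (ξ y) with hv
    have hchnorm : ∀ z : ℤ_[p], ‖ch z‖ = ‖z‖ := fun z => PadicInt.padic_norm_e_of_padicInt z
    have hξn : ∀ y ∈ T, PadicInt.toZModPow n (ξ y) = x y := by
      intro y hy
      simp only [hξ, map_natCast]
      exact ZMod.natCast_zmod_val _
    have hξm' : ∀ y ∈ T, PadicInt.toZModPow m (ξ y) = y := by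
      intro y hy
      have h1 : PadicInt.toZModPow m (ξ y) = ((x y).val : ZMod (p ^ m)) := by
        simp only [hξ, map_natCast]
      have h2 : ((x y).val : ZMod (p ^ m)) = ZMod.cast (x y) := ZMod.natCast_val _
      have h3 := hxc y hy
      rw [hc] at h3
      simp only [ZMod.castHom_apply] at h3
      rw [h1, h2, h3]
    have heval : ∀ y ∈ T, ‖Polynomial.eval (ξ y) f‖ ≤ (p : ℝ) ^ (-(n : ℤ)) := by
      intro y hy
      have h0 : PadicInt.toZModPow n (Polynomial.eval (ξ y) f) = 0 := by
        have h4 : Polynomial.eval (PadicInt.toZModPow n (ξ y)) g = 0 := by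
          rw [hξn y hy]
          have hxS' := hxS y hy
          rw [hS] at hxS'
          simp only [Finset.mem_filter] at hxS'
          exact hxS'.2
        rw [hg, Polynomial.eval_map, Polynomial.eval₂_at_apply] at h4
        exact h4
      rw [PadicInt.norm_le_pow_iff_mem_span_pow, ← PadicInt.ker_toZModPow, RingHom.mem_ker]
      exact h0
    have hsep : ∀ y ∈ T, ∀ z ∈ T, y ≠ z →
        (p : ℝ) ^ (-(m : ℤ) + 1) ≤ ‖ξ y - ξ z‖ := by
      intro y hy z hz hyz
      have hne : PadicInt.toZModPow m (ξ y - ξ z) ≠ 0 := by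
        rw [map_sub, hξm' y hy, hξm' z hz]
        simpa [sub_eq_zero] using hyz
      have hnot : ¬ (‖ξ y - ξ z‖ ≤ (p : ℝ) ^ (-(m : ℤ))) := by
        rw [PadicInt.norm_le_pow_iff_mem_span_pow, ← PadicInt.ker_toZModPow, RingHom.mem_ker]
        exact hne
      have h5 := (PadicInt.norm_le_pow_iff_norm_lt_pow_add_one (ξ y - ξ z) (-(m : ℤ))).not.1 hnot
      push_neg at h5
      exact h5
    have hξinj : ∀ y ∈ T, ∀ z ∈ T, ξ y = ξ z → y = z := by
      intro y hy z hz hyz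
      rw [← hξm' y hy, ← hξm' z hz, hyz]
    have hvinj : Set.InjOn v T := by
      intro y hy z hz hvyz
      apply hξinj y hy z hz
      have h : (ξ y : ℚ_[p]) = (ξ z : ℚ_[p]) := hvyz
      exact Subtype.coe_injective h
    set F : Polynomial ℚ_[p] := f.map ch with hF
    have hdegF : F.degree < (T.card : ℕ) := by
      rw [hTcard]
      calc F.degree ≤ (F.natDegree : WithBot ℕ) := Polynomial.degree_le_natDegree
        _ ≤ (d : WithBot ℕ) := by
            exact_mod_cast Polynomial.natDegree_map_le.trans hdeg
        _ < ((d + 1 : ℕ) : WithBot ℕ) := by exact_mod_cast Nat.lt_succ_self d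
    have hinterp := Lagrange.eq_interpolate (v := v) (s := T) hvinj hdegF
    -- bound all coefficients of F
    have hcoeff : ∀ k, ‖F.coeff k‖ ≤ (p : ℝ) ^ (((m : ℤ) - 1) * d - n) := by
      intro k
      have hck : F.coeff k =
          ∑ y ∈ T, Polynomial.eval (v y) F * (Lagrange.basis T v y).coeff k := by
        conv_lhs => rw [hinterp]
        rw [Lagrange.interpolate_apply, Polynomial.finset_sum_coeff]
        exact Finset.sum_congr rfl fun y hy => by rw [Polynomial.coeff_C_mul]
      rw [hck]
      apply IsUltrametricDist.norm_sum_le_of_forall_le_of_nonneg (by positivity)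
      intro y hy
      rw [norm_mul]
      -- eval bound
      have he : ‖Polynomial.eval (v y) F‖ ≤ (p : ℝ) ^ (-(n : ℤ)) := by
        have : Polynomial.eval (v y) F = ch (Polynomial.eval (ξ y) f) := by
          rw [hF, Polynomial.eval_map, hv, Polynomial.eval₂_at_apply]
        rw [this, hchnorm]
        exact heval y hy
      -- basis coefficient bound
      have hbasis : Lagrange.basis T v y =
          Polynomial.C (∏ z ∈ T.erase y, (v y - v z)⁻¹) *
          ((∏ z ∈ T.erase y, (Polynomial.X - Polynomial.C (ξ z))).map ch) := by
        rw [Polynomial.map_prod, map_prod, ← Finset.prod_mul_distrib, Lagrange.basis]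
        refine Finset.prod_congr rfl fun z hz => ?_
        rw [Lagrange.basisDivisor]
        congr 1
        rw [Polynomial.map_sub, Polynomial.map_X, Polynomial.map_C]
      have hb : ‖(Lagrange.basis T v y).coeff k‖ ≤ (p : ℝ) ^ (((m : ℤ) - 1) * d) := by
        rw [hbasis, Polynomial.coeff_C_mul, norm_mul]
        have h6 : ‖((∏ z ∈ T.erase y, (Polynomial.X - Polynomial.C (ξ z))).map ch).coeff k‖
            ≤ 1 := by
          rw [Polynomial.coeff_map, hchnorm]
          exact PadicInt.norm_le_one _
        have h7 : ‖∏ z ∈ T.erase y, (v y - v z)⁻¹‖ ≤ (p : ℝ) ^ (((m : ℤ) - 1) * d) := by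
          rw [norm_prod]
          have h8 : ∀ z ∈ T.erase y, ‖(v y - v z)⁻¹‖ ≤ (p : ℝ) ^ ((m : ℤ) - 1) := by
            intro z hz
            have hzT := Finset.mem_of_mem_erase hz
            have hzy : y ≠ z := (Finset.ne_of_mem_erase hz).symm
            have hsep' := hsep y hy z hzT hzy
            have hvsub : v y - v z = ch (ξ y - ξ z) := by rw [map_sub]
            rw [norm_inv, hvsub, hchnorm]
            have hpos : (0 : ℝ) < (p : ℝ) ^ (-(m : ℤ) + 1) := by positivity
            calc ‖ξ y - ξ z‖⁻¹ ≤ ((p : ℝ) ^ (-(m : ℤ) + 1))⁻¹ :=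
                  inv_anti₀ hpos hsep'
              _ = (p : ℝ) ^ ((m : ℤ) - 1) := by
                  rw [← zpow_neg]
                  ring_nf
          calc ∏ z ∈ T.erase y, ‖(v y - v z)⁻¹‖
              ≤ ∏ _z ∈ T.erase y, (p : ℝ) ^ ((m : ℤ) - 1) :=
                Finset.prod_le_prod (fun z _ => norm_nonneg _) h8
            _ = ((p : ℝ) ^ ((m : ℤ) - 1)) ^ (T.erase y).card := Finset.prod_const _
            _ = (p : ℝ) ^ (((m : ℤ) - 1) * d) := by
                rw [Finset.card_erase_of_mem hy, hTcard, Nat.add_sub_cancel,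
                  ← zpow_natCast ((p : ℝ) ^ ((m : ℤ) - 1)) d, ← zpow_mul]
        calc ‖∏ z ∈ T.erase y, (v y - v z)⁻¹‖ * ‖_‖
            ≤ (p : ℝ) ^ (((m : ℤ) - 1) * d) * 1 := by
              exact mul_le_mul h7 h6 (norm_nonneg _) (by positivity)
          _ = (p : ℝ) ^ (((m : ℤ) - 1) * d) := mul_one _
      calc ‖Polynomial.eval (v y) F‖ * ‖(Lagrange.basis T v y).coeff k‖
          ≤ (p : ℝ) ^ (-(n : ℤ)) * (p : ℝ) ^ (((m : ℤ) - 1) * d) :=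
            mul_le_mul he hb (norm_nonneg _) (by positivity)
        _ = (p : ℝ) ^ (((m : ℤ) - 1) * d - n) := by
            rw [← zpow_add₀ (show (p : ℝ) ≠ 0 by positivity)]
            ring_nf
    -- contradiction with the unit coefficient
    obtain ⟨k, hk⟩ := hunit
    have hk1 : ‖f.coeff k‖ = 1 := PadicInt.isUnit_iff.1 hk
    have hklt : ‖f.coeff k‖ < 1 := by
      have h9 : ‖F.coeff k‖ = ‖f.coeff k‖ := by
        rw [hF, Polynomial.coeff_map, hchnorm]
      have h10 := hcoeff k
      rw [h9] at h10
      have hexp : ((m : ℤ) - 1) * d - n ≤ -1 := by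
        have hz : ((m - 1 : ℕ) : ℤ) * d ≤ ((n - 1 : ℕ) : ℤ) := by exact_mod_cast hm1
        rw [Nat.cast_sub hm1', Nat.cast_sub hn] at hz
        push_cast at hz ⊢
        linarith
      calc ‖f.coeff k‖ ≤ (p : ℝ) ^ (((m : ℤ) - 1) * d - n) := h10
        _ ≤ (p : ℝ) ^ (-1 : ℤ) := by
            apply zpow_le_zpow_right₀ (by exact_mod_cast hp1.le) hexp
        _ < 1 := by
            rw [zpow_neg_one]
            exact inv_lt_one_of_one_lt₀ (by exact_mod_cast hp1)
    exact absurd hk1 (ne_of_lt hklt)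
  -- conclusion
  have htot : S.card ≤ p ^ (n - m) * d := h1.trans (Nat.mul_le_mul_left _ h2)
  rw [hcard]
  calc (S.card : ℝ) ≤ (p : ℝ) ^ (n - m) * d := by exact_mod_cast htot
    _ ≤ (p : ℝ) ^ ((n : ℝ) - (n : ℝ) / (d : ℝ)) * d := by
        apply mul_le_mul_of_nonneg_right _ (by positivity)
        rw [← Real.rpow_natCast (p : ℝ) (n - m)]
        apply Real.rpow_le_rpow_of_exponent_le (by exact_mod_cast hp1.le)
        rw [Nat.cast_sub hmn]
        have hdpos : (0:ℝ) < d := by exact_mod_cast hd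
        have : (n : ℝ) / d ≤ m := by
          rw [div_le_iff₀ hdpos]
          exact_mod_cast hnm
        linarith
    _ = (d : ℝ) * (p : ℝ) ^ ((n : ℝ) - (n : ℝ) / (d : ℝ)) := mul_comm _ _
end

section
/- Let V be a finite-dimensional real inner product space and let Ψ ⊂ V be a reduced crystallographic root system, i.e.: Ψ is finite, spans V, does not contain 0; for every α ∈ Ψ the reflection s_α(x) = x − (2⟨x,α⟩/⟨α,α⟩)·α maps Ψ into itself; 2⟨β,α⟩/⟨α,α⟩ ∈ ℤ for all α, β ∈ Ψ; and for α ∈ Ψ the only scalar multiples of α lying in Ψ are ±α. Let Δ ⊆ Ψ be a set of simple roots, i.e., a basis of V such that every element of Ψ is a linear combination of Δ whose integer coefficients are either all ≥ 0 or all ≤ 0, and let Ψ⁺ be the set of positive roots (those with all coefficients ≥ 0). Let β ∈ Ψ⁺ and write β = Σ_{α ∈ Δ} n_α·α with non-negative integers n_α. Then for every α ∈ Δ, the coefficient n_α is positive if and only if there exist k ≥ 1 and positive roots β₁, …, β_k ∈ Ψ⁺ with β₁ = α, β_k = β, and β_{i+1} − β_i ∈ Ψ⁺ for all i = 1, …,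 k−1. -/
open scoped RealInnerProductSpace

section
variable {V : Type} [NormedAddCommGroup V] [InnerProductSpace ℝ V]
  {Ψ : Finset V}
  (h0 : (0 : V) ∉ Ψ)
  (hrefl : ∀ α ∈ Ψ, ∀ β ∈ Ψ, β - (2 * ⟪β, α⟫ / ⟪α, α⟫) • α ∈ Ψ)
  (hint : ∀ α ∈ Ψ, ∀ β ∈ Ψ, ∃ k : ℤ, 2 * ⟪β, α⟫ / ⟪α, α⟫ = (k : ℝ))
  (hred : ∀ α ∈ Ψ, ∀ t : ℝ, t • α ∈ Ψ → t = 1 ∨ t = -1)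

include h0

lemma aux_inner_self_pos {γ : V} (hγ : γ ∈ Ψ) : (0:ℝ) < ⟪γ, γ⟫ := by
  have hγ0 : γ ≠ 0 := fun h => h0 (h ▸ hγ)
  exact lt_of_le_of_ne real_inner_self_nonneg
    (fun h => hγ0 (inner_self_eq_zero.mp h.symm))

include hrefl

lemma aux_neg_mem {γ : V} (hγ : γ ∈ Ψ) : -γ ∈ Ψ := by
  have hin : (0:ℝ) < ⟪γ, γ⟫ := aux_inner_self_pos h0 hγ
  have := hrefl γ hγ γ hγ
  rw [show (2 * ⟪γ, γ⟫ / ⟪γ, γ⟫ : ℝ) = 2 by field_simp] at this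
  simpa [two_smul, sub_add_eq_sub_sub] using this

include hint hred

lemma aux_sub_mem {α β : V} (hα : α ∈ Ψ) (hβ : β ∈ Ψ) (hpos : 0 < ⟪β, α⟫)
    (hne : β ≠ α) : β - α ∈ Ψ := by
  have hα0 : α ≠ 0 := fun h => h0 (h ▸ hα)
  have hβ0 : β ≠ 0 := fun h => h0 (h ▸ hβ)
  have hαα : (0:ℝ) < ⟪α, α⟫ := aux_inner_self_pos h0 hα
  have hββ : (0:ℝ) < ⟪β, β⟫ := aux_inner_self_pos h0 hβ
  obtain ⟨c, hc⟩ := hint α hα β hβ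
  obtain ⟨d, hd⟩ := hint β hβ α hα
  have hcpos : (0:ℝ) < c := by rw [← hc]; positivity
  have hdpos : (0:ℝ) < d := by
    rw [← hd]
    have h' : 0 < ⟪α, β⟫ := by rwa [real_inner_comm]
    positivity
  have hnotpar : ‖α‖ • β ≠ ‖β‖ • α := by
    intro h
    have hna : ‖α‖ ≠ 0 := norm_ne_zero_iff.mpr hα0
    have hβeq : β = (‖β‖ / ‖α‖) • α := by
      have h2 := congrArg (fun x => (‖α‖)⁻¹ • x) h
      simp only [smul_smul, inv_mul_cancel₀ hna, one_smul] at h2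
      rw [div_eq_inv_mul]; exact h2
    rcases hred α hα (‖β‖ / ‖α‖) (hβeq ▸ hβ) with h1 | h1
    · exact hne (by rw [hβeq, h1, one_smul])
    · have hp : (0:ℝ) < ‖β‖ / ‖α‖ := by
        have := norm_pos_iff.mpr hβ0
        have := (norm_pos_iff (a := α)).mpr hα0
        positivity
      rw [h1] at hp; linarith
  have hCS : ⟪β, α⟫ < ‖β‖ * ‖α‖ := inner_lt_norm_mul_iff_real.mpr (by
    intro h; exact hnotpar (by rw [h]))
  have hsq : ⟪β, α⟫ * ⟪β, α⟫ < ⟪α, α⟫ * ⟪β, β⟫ := by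
    have h1 : ⟪β, α⟫ * ⟪β, α⟫ < (‖β‖ * ‖α‖) * (‖β‖ * ‖α‖) :=
      mul_self_lt_mul_self (le_of_lt hpos) hCS
    have h2 : (‖β‖ * ‖α‖) * (‖β‖ * ‖α‖) = ⟪α, α⟫ * ⟪β, β⟫ := by
      rw [real_inner_self_eq_norm_mul_norm, real_inner_self_eq_norm_mul_norm]; ring
    linarith
  have hcd : (c:ℝ) * d < 4 := by
    have heq : (c:ℝ) * d = 4 * (⟪β, α⟫ * ⟪β, α⟫) / (⟪α, α⟫ * ⟪β, β⟫) := by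
      rw [← hc, ← hd, real_inner_comm α β]
      field_simp; ring
    rw [heq, div_lt_iff₀ (by positivity)]
    nlinarith
  have hc1 : 1 ≤ c := by exact_mod_cast hcpos
  have hd1 : 1 ≤ d := by exact_mod_cast hdpos
  have hcdZ : c * d < 4 := by exact_mod_cast hcd
  have : c = 1 ∨ d = 1 := by
    by_contra hcon
    push_neg at hcon
    have : 2 ≤ c := by omega
    have : 2 ≤ d := by omega
    nlinarith
  rcases this with h1 | h1
  · have := hrefl α hα β hβ
    rw [hc, h1] at this
    simpa using this
  · have := hrefl β hβ α hα
    rw [hd, h1] at this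
    have h2 : α - β ∈ Ψ := by simpa using this
    have := aux_neg_mem h0 hrefl h2
    simpa using this

end

section
variable {V : Type} [NormedAddCommGroup V] [InnerProductSpace ℝ V]
  {Ψ : Finset V}
  (h0 : (0 : V) ∉ Ψ)
  (hrefl : ∀ α ∈ Ψ, ∀ β ∈ Ψ, β - (2 * ⟪β, α⟫ / ⟪α, α⟫) • α ∈ Ψ)
  (hint : ∀ α ∈ Ψ, ∀ β ∈ Ψ, ∃ k : ℤ, 2 * ⟪β, α⟫ / ⟪α, α⟫ = (k : ℝ))
  (hred : ∀ α ∈ Ψ, ∀ t : ℝ, t • α ∈ Ψ → t = 1 ∨ t = -1)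
  {ι : Type} [Fintype ι] {b : Module.Basis ι ℝ V}
  (hbΨ : ∀ i, b i ∈ Ψ)
  (hbase : ∀ β ∈ Ψ, (∀ i, ∃ k : ℤ, b.repr β i = (k : ℝ)) ∧
      ((∀ i, 0 ≤ b.repr β i) ∨ (∀ i, b.repr β i ≤ 0)))

include h0 hrefl hint hred hbΨ hbase

-- Step lemma: subtracting a suitable simple root stays in Ψ⁺
lemma aux_step {β : V} (hβ : β ∈ Ψ) (hβpos : ∀ i, 0 ≤ b.repr β i)
    {j : ι} (hj : 0 < ⟪β, b j⟫) (hne : β ≠ b j) :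
    β - b j ∈ Ψ ∧ ∀ i, 0 ≤ b.repr (β - b j) i := by
  classical
  have hmem : β - b j ∈ Ψ := aux_sub_mem h0 hrefl hint hred (hbΨ j) hβ hj hne
  refine ⟨hmem, ?_⟩
  have hrepr : ∀ i, b.repr (β - b j) i = b.repr β i - (if j = i then 1 else 0) := by
    intro i
    rw [map_sub, Finsupp.sub_apply, Module.Basis.repr_self, Finsupp.single_apply]
  rcases (hbase _ hmem).2 with h | h
  · exact h
  · exfalso
    have hzero : ∀ i, i ≠ j → b.repr β i = 0 := by
      intro i hij
      have h1 := h i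
      rw [hrepr i, if_neg (fun hh => hij hh.symm)] at h1
      have h2 := hβpos i
      linarith
    have hβeq : β = b.repr β j • b j := by
      conv_lhs => rw [← b.sum_repr β]
      rw [Finset.sum_eq_single j]
      · intro i _ hij; rw [hzero i hij, zero_smul]
      · intro hj'; exact absurd (Finset.mem_univ j) hj'
    rcases hred (b j) (hbΨ j) (b.repr β j) (hβeq ▸ hβ) with h1 | h1
    · rw [h1, one_smul] at hβeq; exact hne hβeq
    · have := hβpos j; rw [h1] at this; linarith

-- there is a simple root with positive inner product with β
lemma aux_exists_j {β : V} (hβ : β ∈ Ψ) (hβpos : ∀ i, 0 ≤ b.repr β i) :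
    ∃ j, 0 < ⟪β, b j⟫ := by
  by_contra hcon
  push_neg at hcon
  have hββ : (0:ℝ) < ⟪β, β⟫ := aux_inner_self_pos h0 hβ
  have : ⟪β, β⟫ = ∑ i, b.repr β i * ⟪β, b i⟫ := by
    nth_rewrite 2 [← b.sum_repr β]
    rw [inner_sum]
    exact Finset.sum_congr rfl fun i _ => real_inner_smul_right β (b i) _
  have hle : ∑ i, b.repr β i * ⟪β, b i⟫ ≤ 0 :=
    Finset.sum_nonpos fun i _ => mul_nonpos_of_nonneg_of_nonpos (hβpos i) (hcon i)
  linarith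

lemma aux_main (i₀ : ι) :
    ∀ n : ℕ, ∀ β : V, β ∈ Ψ → (∀ i, 0 ≤ b.repr β i) → 0 < b.repr β i₀ →
      (∑ i, b.repr β i) ≤ n →
      ∃ k : ℕ, 1 ≤ k ∧ ∃ c : ℕ → V,
        c 0 = b i₀ ∧ c (k - 1) = β ∧
        (∀ j < k, c j ∈ Ψ ∧ ∀ i, 0 ≤ b.repr (c j) i) ∧
        (∀ j, j + 1 < k →
          (c (j + 1) - c j ∈ Ψ ∧ ∀ i, 0 ≤ b.repr (c (j + 1) - c j) i)) := by
  classical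
  intro n
  induction n with
  | zero =>
    intro β hβ hβpos hi₀ hsum
    exfalso
    have h1 : b.repr β i₀ ≤ ∑ i, b.repr β i :=
      Finset.single_le_sum (fun i _ => hβpos i) (Finset.mem_univ i₀)
    simp only [Nat.cast_zero] at hsum
    linarith
  | succ n ih =>
    intro β hβ hβpos hi₀ hsum
    by_cases hβeq : β = b i₀
    · refine ⟨1, le_refl 1, fun _ => β, hβeq.symm ▸ rfl, rfl, ?_, ?_⟩
      · intro j _; exact ⟨hβ, hβpos⟩
      · intro j hj; omega
    · obtain ⟨j, hj⟩ := aux_exists_j h0 hrefl hint hred hbΨ hbase hβ hβpos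
      have hnej : β ≠ b j := by
        by_cases hji : j = i₀
        · rw [hji]; exact hβeq
        · intro h
          rw [h] at hi₀
          rw [Module.Basis.repr_self, Finsupp.single_apply, if_neg hji] at hi₀
          exact lt_irrefl 0 hi₀
      obtain ⟨hmem, hpos'⟩ := aux_step h0 hrefl hint hred hbΨ hbase hβ hβpos hj hnej
      by_cases hji : j = i₀
      · -- chain of length 2 : b i₀, β
        subst hji
        have hbpos : ∀ i, 0 ≤ b.repr (b j) i := fun i => by
          rw [Module.Basis.repr_self, Finsupp.single_apply]
          split <;> norm_num
        refine ⟨2, by norm_num, fun m => if m = 0 then b j else β,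
          by norm_num, by norm_num, ?_, ?_⟩
        · intro m hm
          have hm' : m = 0 ∨ m = 1 := by omega
          rcases hm' with h | h <;> subst h
          · exact ⟨by simpa using hbΨ j, by simpa using hbpos⟩
          · exact ⟨by simpa using hβ, by simpa using hβpos⟩
        · intro m hm
          have hm0 : m = 0 := by omega
          subst hm0
          have he : (if (0:ℕ) + 1 = 0 then b j else β) - (if (0:ℕ) = 0 then b j else β)
              = β - b j := by norm_num
          exact ⟨by simpa [he] using hmem, fun i => by simpa [he] using hpos' i⟩
      · -- recurse on β - b j
        have hi₀' : 0 < b.repr (β - b j) i₀ := by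
          rw [map_sub, Finsupp.sub_apply, Module.Basis.repr_self, Finsupp.single_apply,
            if_neg hji, sub_zero]
          exact hi₀
        have hsum' : (∑ i, b.repr (β - b j) i) ≤ n := by
          have heq : ∑ i, b.repr (β - b j) i = (∑ i, b.repr β i) - 1 := by
            have hterm : ∀ i, b.repr (β - b j) i
                = b.repr β i - (if j = i then 1 else 0) := fun i => by
              rw [map_sub, Finsupp.sub_apply, Module.Basis.repr_self, Finsupp.single_apply]
            rw [Finset.sum_congr rfl fun i _ => hterm i, Finset.sum_sub_distrib,
              Finset.sum_ite_eq Finset.univ j (fun _ => (1:ℝ)),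
              if_pos (Finset.mem_univ j)]
          push_cast at hsum ⊢
          linarith
        obtain ⟨k, hk1, c, hc0, hck, hcmem, hcstep⟩ :=
          ih (β - b j) hmem hpos' hi₀' hsum'
        refine ⟨k + 1, by omega, fun m => if m < k then c m else β, ?_, ?_, ?_, ?_⟩
        · show (if 0 < k then c 0 else β) = b i₀
          rw [if_pos (by omega)]; exact hc0
        · show (if k + 1 - 1 < k then c (k + 1 - 1) else β) = β
          rw [Nat.add_sub_cancel, if_neg (lt_irrefl k)]
        · intro m hm
          show (if m < k then c m else β) ∈ Ψ ∧
            ∀ i, 0 ≤ b.repr (if m < k then c m else β) i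
          by_cases h : m < k
          · rw [if_pos h]; exact hcmem m h
          · rw [if_neg h]; exact ⟨hβ, hβpos⟩
        · intro m hm
          show ((if m + 1 < k then c (m + 1) else β) - (if m < k then c m else β)) ∈ Ψ ∧
            ∀ i, 0 ≤ b.repr ((if m + 1 < k then c (m + 1) else β)
              - (if m < k then c m else β)) i
          by_cases h : m + 1 < k
          · rw [if_pos h, if_pos (by omega)]
            exact hcstep m h
          · have hmk : m + 1 = k := by omega
            rw [if_neg (by omega), if_pos (by omega)]
            have hcm : c m = β - b j := by rw [show m = k - 1 by omega]; exact hck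
            rw [hcm, sub_sub_cancel]
            refine ⟨hbΨ j, fun i => ?_⟩
            rw [Module.Basis.repr_self, Finsupp.single_apply]
            split <;> norm_num
end

/-- **Lemma (chains of positive roots).**
Let `Ψ` be a reduced crystallographic root system in a finite-dimensional real inner product
space `V`, with simple roots `Δ` (indexed by a basis `b`) and positive roots `Ψ⁺`. Let
`β ∈ Ψ⁺` with `β = ∑ n_α α`. Then for a simple root `α = b i₀` the coefficient `n_α` is
positive if and only if there is a sequence `β₁ = α, …, β_k = β` of positive roots with each
difference `β_{i+1} - β_i` a positive root. -/
theorem stmt_18 (V : Type) [NormedAddCommGroup V] [InnerProductSpace ℝ V]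
    [FiniteDimensional ℝ V] (Ψ : Finset V)
    (hspan : Submodule.span ℝ (Ψ : Set V) = ⊤)
    (h0 : (0 : V) ∉ Ψ)
    (hrefl : ∀ α ∈ Ψ, ∀ β ∈ Ψ, β - (2 * ⟪β, α⟫ / ⟪α, α⟫) • α ∈ Ψ)
    (hint : ∀ α ∈ Ψ, ∀ β ∈ Ψ, ∃ k : ℤ, 2 * ⟪β, α⟫ / ⟪α, α⟫ = (k : ℝ))
    (hred : ∀ α ∈ Ψ, ∀ t : ℝ, t • α ∈ Ψ → t = 1 ∨ t = -1)
    {ι : Type} [Fintype ι] (b : Module.Basis ι ℝ V)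
    (hbΨ : ∀ i, b i ∈ Ψ)
    (hbase : ∀ β ∈ Ψ, (∀ i, ∃ k : ℤ, b.repr β i = (k : ℝ)) ∧
      ((∀ i, 0 ≤ b.repr β i) ∨ (∀ i, b.repr β i ≤ 0)))
    (β : V) (hβ : β ∈ Ψ) (hβpos : ∀ i, 0 ≤ b.repr β i)
    (i₀ : ι) :
    0 < b.repr β i₀ ↔
      ∃ k : ℕ, 1 ≤ k ∧ ∃ c : ℕ → V,
        c 0 = b i₀ ∧ c (k - 1) = β ∧
        (∀ j < k, c j ∈ Ψ ∧ ∀ i, 0 ≤ b.repr (c j) i) ∧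
        (∀ j, j + 1 < k →
          (c (j + 1) - c j ∈ Ψ ∧ ∀ i, 0 ≤ b.repr (c (j + 1) - c j) i)) := by
  classical
  constructor
  · intro hpos
    exact aux_main h0 hrefl hint hred hbΨ hbase i₀ ⌈∑ i, b.repr β i⌉₊ β hβ hβpos hpos
      (Nat.le_ceil _)
  · rintro ⟨k, hk1, c, hc0, hck, hcmem, hcstep⟩
    have key : ∀ j, j < k → 0 < b.repr (c j) i₀ := by
      intro j
      induction j with
      | zero =>
        intro _
        rw [hc0, Module.Basis.repr_self, Finsupp.single_apply, if_pos rfl]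
        norm_num
      | succ m ihm =>
        intro hm
        have h1 : 0 < b.repr (c m) i₀ := ihm (by omega)
        have h2 := (hcstep m hm).2 i₀
        have h3 : b.repr (c (m + 1)) i₀
            = b.repr (c m) i₀ + b.repr (c (m + 1) - c m) i₀ := by
          rw [map_sub, Finsupp.sub_apply]; ring
        linarith
    have := key (k - 1) (by omega)
    rwa [hck] at this
end
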